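/- arXiv:2507.06982 — 5 statements merged into one kernel-verified Lean document; each statement's English description precedes it below -/
import Mathlib

section
/- Under the standing setup (Assumption 1), problem (P) has at least one solution, i.e., there exists u* ∈ U feasible for (P) that minimizes F(u) + ψ(u) over all feasible points. -/
open MeasureTheory Filter Topology TopologicalSpace
open scoped ENNReal

noncomputable section

/-- Weak-star convergence of a sequence in the dual `U = X*` of a Banach space `X`. -/
def WSTendsto {X : Type*} [NormedAddCommGroup X] [NormedSpace ℝ X]
    (u : ℕ → StrongDual ℝ X) (u₀ : StrongDual ℝ X) : Prop :=
  ∀ x : X, Tendsto (fun n => u n x) atTop (𝓝 (u₀ x))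

open Classical in
/-- The `[0,∞]`-valued indicator function `I_C` of a set: `0` on `C` and `∞` off `C`. -/
def iInd {α : Type*} (C : Set α) (a : α) : ℝ≥0∞ := if a ∈ C then 0 else ⊤

/-- Assumption 1 (standing setup): `U := StrongDual ℝ X` is the dual of the real
separable Banach space `X`; `B` is linear and weakly*-to-strongly continuous; `𝒥` is a
nonnegative random lower semicontinuous integrand; `𝒢 : W × Ξ → R₀` is Carathéodory with
values in `R` along `B`, Carathéodory into `R` on `B(dom ψ) × Ξ`; `K ⊂ R` is a nonempty
closed convex cone; `ψ` is proper, convex, weakly* lsc with bounded weakly* closed domain;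
and problem (P) has a feasible point with finite objective value. -/
structure StandingSetup (X W R R₀ Ξ Ω : Type*)
    [NormedAddCommGroup X] [NormedSpace ℝ X]
    [NormedAddCommGroup W] [NormedSpace ℝ W]
    [NormedAddCommGroup R] [NormedSpace ℝ R]
    [NormedAddCommGroup R₀] [NormedSpace ℝ R₀]
    [MeasurableSpace R] [BorelSpace R] [MeasurableSpace R₀] [BorelSpace R₀]
    [MetricSpace Ξ] [MeasurableSpace Ξ] [BorelSpace Ξ]
    [MeasurableSpace Ω] : Type _ where
  /-- the sample probability measure -/
  P : Measure Ω
  hP : IsProbabilityMeasure P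
  /-- the law `ℙ` of the random element `ξ` -/
  μ : Measure Ξ
  hμ : IsProbabilityMeasure μ
  /-- the i.i.d. samples `ξ¹, ξ², …` -/
  samp : ℕ → Ω → Ξ
  samp_meas : ∀ i, Measurable (samp i)
  samp_law : ∀ i, Measure.map (samp i) P = μ
  samp_indep : ProbabilityTheory.iIndepFun samp P
  /-- the linear, weakly*-to-strongly continuous operator `B : U → W` -/
  B : StrongDual ℝ X →ₗ[ℝ] W
  B_wsc : ∀ (u : ℕ → StrongDual ℝ X) (u₀ : StrongDual ℝ X),
    WSTendsto u u₀ → Tendsto (fun n => B (u n)) atTop (𝓝 (B u₀))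
  /-- the integrand `𝒥 : W × Ξ → [0,∞)` -/
  J : W → Ξ → ℝ
  J_nonneg : ∀ w ξ, 0 ≤ J w ξ
  /-- random lower semicontinuity of `𝒥`: lower semicontinuity in `w` … -/
  J_lsc : ∀ ξ, LowerSemicontinuous fun w => J w ξ
  /-- … and Effros measurability of the epigraphical multifunction -/
  J_effros : ∀ O : Set (W × ℝ), IsOpen O → MeasurableSet {ξ | ∃ p ∈ O, J p.1 ξ ≤ p.2}
  /-- the control regularizer `ψ : U → [0,∞]` -/
  ψ : StrongDual ℝ X → ℝ≥0∞
  ψ_proper : ∃ u, ψ u ≠ ⊤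
  ψ_convex : ∀ u v : StrongDual ℝ X, ∀ t : ℝ, 0 ≤ t → t ≤ 1 →
    ψ (t • u + (1 - t) • v) ≤ ENNReal.ofReal t * ψ u + ENNReal.ofReal (1 - t) * ψ v
  ψ_wlsc : ∀ (u : ℕ → StrongDual ℝ X) (u₀ : StrongDual ℝ X),
    WSTendsto u u₀ → ψ u₀ ≤ atTop.liminf fun n => ψ (u n)
  ψ_dom_bdd : ∃ C : ℝ, ∀ u, ψ u ≠ ⊤ → ‖u‖ ≤ C
  ψ_dom_closed : ∀ (u : ℕ → StrongDual ℝ X) (u₀ : StrongDual ℝ X),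
    (∀ n, ψ (u n) ≠ ⊤) → WSTendsto u u₀ → ψ u₀ ≠ ⊤
  /-- the nonempty closed convex cone `K ⊂ R` -/
  K : Set R
  K_ne : K.Nonempty
  K_closed : IsClosed K
  K_convex : Convex ℝ K
  K_cone : ∀ (c : ℝ) (r : R), 0 ≤ c → r ∈ K → c • r ∈ K
  /-- the embedding witnessing `R ⊂ R₀` -/
  emb : R →ₗᵢ[ℝ] R₀
  /-- the constraint map `𝒢 : W × Ξ → R₀`, Carathéodory -/
  G₀ : W → Ξ → R₀
  G₀_cont : ∀ ξ, Continuous fun w => G₀ w ξ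
  G₀_meas : ∀ w, Measurable (G₀ w)
  /-- the `R`-valued realization of `𝒢`, i.e. `𝒢(Bu,ξ) ∈ R` for all `(u,ξ)` -/
  G : W → Ξ → R
  G_compat : ∀ (u : StrongDual ℝ X) (ξ : Ξ), G₀ (B u) ξ = emb (G (B u) ξ)
  /-- `𝒢 : B(dom ψ) × Ξ → R` is Carathéodory -/
  G_contOn : ∀ ξ, ContinuousOn (fun w => G w ξ) (B '' {u | ψ u ≠ ⊤})
  G_meas : ∀ w, Measurable (G w)
  /-- problem (P) has a feasible point with finite objective value -/
  feas_pt : ∃ u : StrongDual ℝ X, (∀ᵐ ξ ∂μ, G (B u) ξ ∈ K) ∧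
    (∫⁻ ξ, ENNReal.ofReal (J (B u) ξ) ∂μ) + ψ u ≠ ⊤

namespace StandingSetup

variable {X W R R₀ Ξ Ω : Type*}
    [NormedAddCommGroup X] [NormedSpace ℝ X]
    [NormedAddCommGroup W] [NormedSpace ℝ W]
    [NormedAddCommGroup R] [NormedSpace ℝ R]
    [NormedAddCommGroup R₀] [NormedSpace ℝ R₀]
    [MeasurableSpace R] [BorelSpace R] [MeasurableSpace R₀] [BorelSpace R₀]
    [MetricSpace Ξ] [MeasurableSpace Ξ] [BorelSpace Ξ]
    [MeasurableSpace Ω]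
    (S : StandingSetup X W R R₀ Ξ Ω)

/-- the expected objective `F(u) = E[𝒥(Bu,ξ)]` -/
def F (u : StrongDual ℝ X) : ℝ≥0∞ := ∫⁻ ξ, ENNReal.ofReal (S.J (S.B u) ξ) ∂S.μ

/-- the full objective `F + ψ` of problem (P) -/
def obj (u : StrongDual ℝ X) : ℝ≥0∞ := S.F u + S.ψ u

/-- feasibility for problem (P): `G(u,ξ) ∈ K` for `ℙ`-a.e. `ξ ∈ Ξ` -/
def Feas (u : StrongDual ℝ X) : Prop := ∀ᵐ ξ ∂S.μ, S.G (S.B u) ξ ∈ S.K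

/-- solutions of problem (P) -/
def SolP (u : StrongDual ℝ X) : Prop := S.Feas u ∧ ∀ v, S.Feas v → S.obj u ≤ S.obj v

/-- the optimal value `ϑ*` of problem (P) -/
def valP : ℝ≥0∞ := ⨅ (u : StrongDual ℝ X) (_ : S.Feas u), S.obj u

/-- the SAA objective `F̂_N(·,ω)` -/
def FN (N : ℕ) (ω : Ω) (u : StrongDual ℝ X) : ℝ≥0∞ :=
  (N : ℝ≥0∞)⁻¹ * ∑ i ∈ Finset.range N, ENNReal.ofReal (S.J (S.B u) (S.samp i ω))

/-- the full objective of the SAA problem (P_SAA) -/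
def objN (N : ℕ) (ω : Ω) (u : StrongDual ℝ X) : ℝ≥0∞ := S.FN N ω u + S.ψ u

/-- feasibility for the SAA problem: `G(u,ξⁱ) ∈ K`, `i = 1, …, N` -/
def FeasN (N : ℕ) (ω : Ω) (u : StrongDual ℝ X) : Prop :=
  ∀ i ∈ Finset.range N, S.G (S.B u) (S.samp i ω) ∈ S.K

/-- solutions of the SAA problem (P_SAA) -/
def SolN (N : ℕ) (ω : Ω) (u : StrongDual ℝ X) : Prop :=
  S.FeasN N ω u ∧ ∀ v, S.FeasN N ω v → S.objN N ω u ≤ S.objN N ω v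

/-- the SAA optimal value `ϑ̂_N*` -/
def valN (N : ℕ) (ω : Ω) : ℝ≥0∞ :=
  ⨅ (u : StrongDual ℝ X) (_ : S.FeasN N ω u), S.objN N ω u

/-- the feasible-set multifunction `𝒰(ξ) = {u ∈ U ∣ G(u,ξ) ∈ K}` -/
def Uset (ξ : Ξ) : Set (StrongDual ℝ X) := {u | S.G (S.B u) ξ ∈ S.K}

end StandingSetup

/-! Direct method. Along a minimizing sequence of feasible points `ψ` is finite, so the
sequence is bounded, and sequential Banach–Alaoglu (`X` separable) gives a weakly* convergent
subsequence. Its image under `B` converges in norm, so the constraint passes to the limit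
(`K` closed, `𝒢(·, ξ)` continuous on `B(dom ψ)`) and `F` is lower semicontinuous by Fatou's
lemma; `ψ` is weakly* lower semicontinuous by assumption. -/

theorem ENNReal.le_liminf_add {ι : Type*} {f : Filter ι} {u v : ι → ℝ≥0∞} :
    liminf u f + liminf v f ≤ liminf (u + v) f := by
  simp only [liminf_eq_iSup_iInf]
  exact ENNReal.biSup_add_biSup_le' ⟨_, univ_mem⟩ ⟨_, univ_mem⟩ fun s hs t ht =>
    le_iSup₂_of_le (s ∩ t) (inter_mem hs ht) <|
      le_iInf₂ fun i hi => add_le_add (iInf₂_le i hi.1) (iInf₂_le i hi.2)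

theorem exists_isMinOn_of_exists_subseq_le_liminf {α : Type*} {C : Set α} {f : α → ℝ≥0∞}
    (hfin : ∃ a ∈ C, f a ≠ ⊤)
    (hsubseq : ∀ v : ℕ → α, (∀ n, v n ∈ C) → (∀ n, f (v n) ≠ ⊤) →
      ∃ a ∈ C, ∃ φ : ℕ → ℕ, StrictMono φ ∧ f a ≤ liminf (fun n => f (v (φ n))) atTop) :
    ∃ a ∈ C, IsMinOn f C a := by
  set m := sInf (f '' C)
  obtain ⟨a₀, ha₀, hfa₀⟩ := hfin
  have hm : m ≠ ⊤ := ne_top_of_le_ne_top hfa₀ (sInf_le ⟨a₀, ha₀, rfl⟩)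
  have hnear : ∀ n : ℕ, ∃ a ∈ C, f a < m + (n : ℝ≥0∞)⁻¹ := fun n => by
    obtain ⟨_, ⟨a, ha, rfl⟩, hlt⟩ := sInf_lt_iff.mp <|
      ENNReal.lt_add_right hm (ENNReal.inv_ne_zero.mpr (ENNReal.natCast_ne_top n))
    exact ⟨a, ha, hlt⟩
  choose v hvC hvm using hnear
  have hv : Tendsto (fun n => f (v n)) atTop (𝓝 m) := by
    refine tendsto_of_tendsto_of_tendsto_of_le_of_le tendsto_const_nhds ?_
      (fun n => sInf_le ⟨v n, hvC n, rfl⟩) (fun n => (hvm n).le)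
    simpa using tendsto_const_nhds.add ENNReal.tendsto_inv_nat_nhds_zero
  obtain ⟨a, ha, φ, hφ, hle⟩ := hsubseq v hvC fun n => (hvm n).ne_top
  have hlim : liminf (fun n => f (v (φ n))) atTop = m := (hv.comp hφ.tendsto_atTop).liminf_eq
  exact ⟨a, ha, fun b hb => (hle.trans_eq hlim).trans (sInf_le ⟨b, hb, rfl⟩)⟩

theorem exists_strictMono_wsTendsto_of_norm_le {X : Type*} [NormedAddCommGroup X]
    [NormedSpace ℝ X] [SeparableSpace X] {u : ℕ → StrongDual ℝ X} {C : ℝ}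
    (hC : ∀ n, ‖u n‖ ≤ C) :
    ∃ u₀ : StrongDual ℝ X, ∃ φ : ℕ → ℕ, StrictMono φ ∧ WSTendsto (u ∘ φ) u₀ := by
  obtain ⟨u₀, -, φ, hφ, hlim⟩ := WeakDual.isSeqCompact_closedBall ℝ X 0 C
    (x := fun n => StrongDual.toWeakDual (u n)) fun n => by simpa using hC n
  exact ⟨WeakDual.toStrongDual u₀, φ, hφ, fun x =>
    tendsto_iff_forall_eval_tendsto_topDualPairing.mp hlim x⟩

theorem measurable_of_effros {W Ξ : Type*} [PseudoMetricSpace W] [MeasurableSpace Ξ]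
    {J : W → Ξ → ℝ} (hlsc : ∀ ξ, LowerSemicontinuous fun w => J w ξ)
    (heffros : ∀ O : Set (W × ℝ), IsOpen O → MeasurableSet {ξ | ∃ p ∈ O, J p.1 ξ ≤ p.2})
    (w : W) : Measurable (J w) := by
  refine measurable_of_Iic fun t => ?_
  -- By lower semicontinuity, `J w ξ ≤ t` iff the epigraph of `J · ξ` meets every
  -- neighbourhood `ball w (1/(k+1)) × (-∞, t + 1/(k+1))` of `(w, t)`.
  have hset : J w ⁻¹' Set.Iic t = ⋂ k : ℕ, {ξ | ∃ p ∈ Metric.ball w (1 / (k + 1)) ×ˢ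
      Set.Iio (t + 1 / (k + 1)), J p.1 ξ ≤ p.2} := by
    ext ξ
    simp only [Set.mem_preimage, Set.mem_Iic, Set.mem_iInter, Set.mem_ofPred_eq]
    refine ⟨fun h k => ⟨(w, t), ⟨Metric.mem_ball_self (by positivity), ?_⟩, h⟩, fun h => ?_⟩
    · exact lt_add_of_pos_right t (by positivity)
    choose p hp hJp using h
    have hp₁ : Tendsto (fun k => (p k).1) atTop (𝓝 w) :=
      tendsto_iff_dist_tendsto_zero.mpr <| squeeze_zero (fun _ => dist_nonneg)
        (fun k => (hp k).1.le) tendsto_one_div_add_atTop_nhds_zero_nat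
    have hp₂ : Tendsto (fun k : ℕ => t + 1 / ((k : ℝ) + 1)) atTop (𝓝 t) := by
      simpa using tendsto_const_nhds.add (tendsto_one_div_add_atTop_nhds_zero_nat (𝕜 := ℝ))
    refine le_of_forall_lt_imp_le_of_dense fun y hy => ge_of_tendsto hp₂ ?_
    filter_upwards [hp₁.eventually (hlsc ξ w y hy)] with k hk
    exact (hk.trans_le ((hJp k).trans (hp k).2.le)).le
  rw [hset]
  exact MeasurableSet.iInter fun k => heffros _ (Metric.isOpen_ball.prod isOpen_Iio)

theorem lintegral_le_liminf_of_lowerSemicontinuous {W Ξ : Type*} [TopologicalSpace W]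
    [MeasurableSpace Ξ] {μ : Measure Ξ} {g : W → Ξ → ℝ≥0∞}
    (hlsc : ∀ ξ, LowerSemicontinuous fun w => g w ξ) (hmeas : ∀ w, Measurable (g w))
    {w : ℕ → W} {w₀ : W} (hw : Tendsto w atTop (𝓝 w₀)) :
    ∫⁻ ξ, g w₀ ξ ∂μ ≤ liminf (fun n => ∫⁻ ξ, g (w n) ξ ∂μ) atTop :=
  calc ∫⁻ ξ, g w₀ ξ ∂μ ≤ ∫⁻ ξ, liminf (fun n => g (w n) ξ) atTop ∂μ :=
        lintegral_mono fun ξ => ((hlsc ξ).le_liminf w₀).trans (hw.liminf_le_liminf_comp)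
    _ ≤ liminf (fun n => ∫⁻ ξ, g (w n) ξ ∂μ) atTop := lintegral_liminf_le fun n => hmeas (w n)

theorem ae_mem_of_tendsto_of_continuousOn {W Ξ R : Type*} [TopologicalSpace W]
    [TopologicalSpace R] [MeasurableSpace Ξ] {μ : Measure Ξ} {G : W → Ξ → R} {D : Set W} {K : Set R}
    (hK : IsClosed K) (hG : ∀ ξ, ContinuousOn (fun w => G w ξ) D) {w : ℕ → W} {w₀ : W}
    (hwD : ∀ n, w n ∈ D) (hw₀ : w₀ ∈ D) (hw : Tendsto w atTop (𝓝 w₀))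
    (hK_ae : ∀ n, ∀ᵐ ξ ∂μ, G (w n) ξ ∈ K) : ∀ᵐ ξ ∂μ, G w₀ ξ ∈ K := by
  filter_upwards [ae_all_iff.mpr hK_ae] with ξ hξ
  exact hK.mem_of_tendsto (((hG ξ) w₀ hw₀).tendsto.comp
    (tendsto_nhdsWithin_iff.mpr ⟨hw, Eventually.of_forall hwD⟩)) (Eventually.of_forall hξ)

namespace StandingSetup

variable {X W R R₀ Ξ Ω : Type*}
    [NormedAddCommGroup X] [NormedSpace ℝ X]
    [NormedAddCommGroup W] [NormedSpace ℝ W]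
    [NormedAddCommGroup R] [NormedSpace ℝ R]
    [NormedAddCommGroup R₀] [NormedSpace ℝ R₀]
    [MeasurableSpace R] [BorelSpace R] [MeasurableSpace R₀] [BorelSpace R₀]
    [MetricSpace Ξ] [MeasurableSpace Ξ] [BorelSpace Ξ]
    [MeasurableSpace Ω]
    (S : StandingSetup X W R R₀ Ξ Ω) {v : ℕ → StrongDual ℝ X} {u : StrongDual ℝ X}

theorem exists_strictMono_wsTendsto [SeparableSpace X] (hv : ∀ n, S.ψ (v n) ≠ ⊤) :
    ∃ u₀ : StrongDual ℝ X, ∃ φ : ℕ → ℕ, StrictMono φ ∧ WSTendsto (v ∘ φ) u₀ :=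
  let ⟨_, hC⟩ := S.ψ_dom_bdd
  exists_strictMono_wsTendsto_of_norm_le fun n => hC _ (hv n)

theorem feas_of_wsTendsto (hv : WSTendsto v u) (hfeas : ∀ n, S.Feas (v n))
    (hψ : ∀ n, S.ψ (v n) ≠ ⊤) : S.Feas u :=
  ae_mem_of_tendsto_of_continuousOn S.K_closed S.G_contOn (fun n => ⟨v n, hψ n, rfl⟩)
    ⟨u, S.ψ_dom_closed v u hψ hv, rfl⟩ (S.B_wsc v u hv) hfeas

theorem F_le_liminf_of_wsTendsto (hv : WSTendsto v u) :
    S.F u ≤ liminf (fun n => S.F (v n)) atTop :=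
  lintegral_le_liminf_of_lowerSemicontinuous
    (fun ξ => ENNReal.continuous_ofReal.comp_lowerSemicontinuous (S.J_lsc ξ)
      ENNReal.ofReal_mono)
    (fun w => (measurable_of_effros S.J_lsc S.J_effros w).ennreal_ofReal) (S.B_wsc v u hv)

theorem obj_le_liminf_of_wsTendsto (hv : WSTendsto v u) :
    S.obj u ≤ liminf (fun n => S.obj (v n)) atTop :=
  (add_le_add (S.F_le_liminf_of_wsTendsto hv) (S.ψ_wlsc v u hv)).trans ENNReal.le_liminf_add

end StandingSetup

theorem problem_P_has_a_solution_general {X W R R₀ Ξ Ω : Type*}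
    [NormedAddCommGroup X] [NormedSpace ℝ X] [SeparableSpace X]
    [NormedAddCommGroup W] [NormedSpace ℝ W]
    [NormedAddCommGroup R] [NormedSpace ℝ R]
    [NormedAddCommGroup R₀] [NormedSpace ℝ R₀]
    [MeasurableSpace R] [BorelSpace R] [MeasurableSpace R₀] [BorelSpace R₀]
    [MetricSpace Ξ]
    [MeasurableSpace Ξ] [BorelSpace Ξ] [MeasurableSpace Ω]
    (S : StandingSetup X W R R₀ Ξ Ω) :
    ∃ u : StrongDual ℝ X, S.SolP u := by
  obtain ⟨u, hu, hmin⟩ := exists_isMinOn_of_exists_subseq_le_liminf (C := {u | S.Feas u})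
    (f := S.obj) S.feas_pt fun v hfeas hfin => by
      have hψ : ∀ n, S.ψ (v n) ≠ ⊤ := fun n => ne_top_of_le_ne_top (hfin n) le_add_self
      obtain ⟨u, φ, hφ, hv⟩ := S.exists_strictMono_wsTendsto hψ
      exact ⟨u, S.feas_of_wsTendsto hv (fun n => hfeas (φ n)) (fun n => hψ (φ n)), φ, hφ,
        S.obj_le_liminf_of_wsTendsto hv⟩
  exact ⟨u, hu, fun w hw => hmin hw⟩

/-- Under the standing setup (Assumption 1), problem (P) has at least one
solution: a feasible point minimizing `F + ψ` over all feasible points. -/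
theorem problem_P_has_a_solution {X W R R₀ Ξ Ω : Type*}
    [NormedAddCommGroup X] [NormedSpace ℝ X] [SeparableSpace X] [CompleteSpace X]
    [NormedAddCommGroup W] [NormedSpace ℝ W] [SeparableSpace W] [CompleteSpace W]
    [NormedAddCommGroup R] [NormedSpace ℝ R] [SeparableSpace R] [CompleteSpace R]
    [NormedAddCommGroup R₀] [NormedSpace ℝ R₀] [SeparableSpace R₀] [CompleteSpace R₀]
    [MeasurableSpace R] [BorelSpace R] [MeasurableSpace R₀] [BorelSpace R₀]
    [MetricSpace Ξ] [CompleteSpace Ξ] [SeparableSpace Ξ]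
    [MeasurableSpace Ξ] [BorelSpace Ξ] [MeasurableSpace Ω]
    (S : StandingSetup X W R R₀ Ξ Ω) :
    ∃ u : StrongDual ℝ X, S.SolP u :=
  problem_P_has_a_solution_general S
end
end

section
/- Under the standing setup (Assumption 1), with probability one the following holds: for every u ∈ dom ψ and every sequence (u_N) ⊂ dom ψ with u_N ⇀* u, one has liminf_{N→∞} F̂_N(u_N) ≥ F(u) and liminf_{N→∞} (1/N) Σ_{i=1}^N I_{𝒰(ξ^i)}(u_N) ≥ E[I_{𝒰(ξ)}(u)]. -/
/-!
Both inequalities are instances of one fact about a nonnegative integrand `h(w, ξ)` that is lower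
semicontinuous in `w` on a second-countable space and whose infima over open sets are measurable
in `ξ`: almost surely, `liminf_N (1/N) ∑ h(w_N, ξⁱ) ≥ E h(w, ξ)` for every convergent `w_N → w`.
The strong law of large numbers (applied to truncations) gives `liminf ≥ E` for the countably many
infima of `h` over the sets of a countable basis. Eventually `w_N` lies in any basic neighbourhood
of `w`, and by lower semicontinuity and monotone convergence along the directed family of these
neighbourhoods their integrals increase to `E h(w, ξ)`.

For `F̂_N` take `h = 𝒥` on `W`, where Effros measurability is exactly measurability of the
infima. For the indicators take `h_k = k · dist(𝒢(·, ξ), K)` on `B(dom ψ)`: it is continuous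
there, so its infima over open sets are infima over a countable dense set, and the indicator of
`𝒰(ξ)` is `sup_k h_k` because `K` is closed.
-/

open MeasureTheory Filter Topology TopologicalSpace
open scoped ENNReal

noncomputable section

open ProbabilityTheory

def sampleMean {Ω Ξ : Type*} (X : ℕ → Ω → Ξ) (f : Ξ → ℝ≥0∞) (N : ℕ) (ω : Ω) : ℝ≥0∞ :=
  (N : ℝ≥0∞)⁻¹ * ∑ i ∈ Finset.range N, f (X i ω)

lemma sampleMean_mono {Ω Ξ : Type*} (X : ℕ → Ω → Ξ) {f g : Ξ → ℝ≥0∞} (hfg : f ≤ g)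
    (N : ℕ) (ω : Ω) : sampleMean X f N ω ≤ sampleMean X g N ω := by
  unfold sampleMean
  gcongr with i
  exact hfg _

theorem LowerSemicontinuousAt.le_iSup_iInf_of_isTopologicalBasis {T γ : Type*}
    [TopologicalSpace T] [CompleteLinearOrder γ] [TopologicalSpace γ] [OrderTopology γ]
    {f : T → γ} {x : T} (hf : LowerSemicontinuousAt f x) {b : Set (Set T)}
    (hb : IsTopologicalBasis b) :
    f x ≤ ⨆ s : {s // s ∈ b ∧ x ∈ s}, ⨅ y ∈ (s : Set T), f y := by
  calc f x ≤ liminf f (𝓝 x) := hf.le_liminf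
    _ = _ := by rw [hb.nhds_hasBasis.liminf_eq_iSup_iInf, iSup_subtype']

theorem measurable_biInf_of_upperSemicontinuous {T Ξ : Type*} [TopologicalSpace T]
    [SeparableSpace T] [MeasurableSpace Ξ] {h : T → Ξ → ℝ≥0∞}
    (husc : ∀ ξ, UpperSemicontinuous (h · ξ)) (hmeas : ∀ y, Measurable (h y)) {s : Set T}
    (hs : IsOpen s) : Measurable fun ξ => ⨅ y ∈ s, h y ξ := by
  obtain ⟨D, hDc, hD⟩ := exists_countable_dense T
  have hinf : ∀ ξ, ⨅ y ∈ s, h y ξ = ⨅ y ∈ s ∩ D, h y ξ := by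
    refine fun ξ => le_antisymm (biInf_mono Set.inter_subset_left) (le_iInf₂ fun y hy => ?_)
    refine le_of_forall_gt fun c hc => ?_
    obtain ⟨d, hdD, hds, hdc⟩ :=
      hD.exists_mem_open (hs.inter ((husc ξ).isOpen_preimage c)) ⟨y, hy, hc⟩
    exact (biInf_le (h · ξ) (show d ∈ s ∩ D from ⟨hds, hdD⟩)).trans_lt hdc
  simp_rw [hinf]
  exact .biInf _ (hDc.mono Set.inter_subset_right) fun y _ => hmeas y

theorem measurable_biInf_ofReal_of_effros {W Ξ : Type*} [TopologicalSpace W] [MeasurableSpace Ξ]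
    {J : W → Ξ → ℝ}
    (hJ : ∀ O : Set (W × ℝ), IsOpen O → MeasurableSet {ξ | ∃ p ∈ O, J p.1 ξ ≤ p.2})
    {s : Set W} (hs : IsOpen s) : Measurable fun ξ => ⨅ w ∈ s, ENNReal.ofReal (J w ξ) := by
  refine measurable_of_Iio fun c => ?_
  convert hJ (s ×ˢ (ENNReal.ofReal ⁻¹' Set.Iio c))
    (hs.prod (isOpen_Iio.preimage ENNReal.continuous_ofReal)) using 1
  ext ξ
  simp only [Set.mem_preimage, Set.mem_Iio, iInf_lt_iff, Set.mem_prod,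
    Prod.exists, exists_prop]
  constructor
  · rintro ⟨w, hw, hwc⟩
    exact ⟨w, J w ξ, ⟨hw, hwc⟩, le_rfl⟩
  · rintro ⟨w, t, ⟨hw, htc⟩, hJt⟩
    exact ⟨w, hw, (ENNReal.ofReal_le_ofReal hJt).trans_lt htc⟩

theorem iInd_eq_iSup_natCast_mul_infEDist {E : Type*} [PseudoEMetricSpace E] {K : Set E}
    (hK : IsClosed K) (x : E) : iInd K x = ⨆ k : ℕ, (k : ℝ≥0∞) * Metric.infEDist x K := by
  have hzero : Metric.infEDist x K = 0 ↔ x ∈ K := by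
    rw [← Metric.mem_closure_iff_infEDist_zero, hK.closure_eq]
  rw [← ENNReal.iSup_mul, ENNReal.iSup_natCast, ENNReal.top_mul']
  by_cases hx : x ∈ K <;> simp [iInd, hx, hzero]

section SampleMean

variable {Ω Ξ : Type*} [MeasurableSpace Ω] [MeasurableSpace Ξ] {P : Measure Ω}
  [IsProbabilityMeasure P] {μ : Measure Ξ} {X : ℕ → Ω → Ξ}

theorem ae_tendsto_sampleMean_of_le (hX : ∀ i, Measurable (X i))
    (hlaw : ∀ i, P.map (X i) = μ) (hindep : Pairwise fun i j => IndepFun (X i) (X j) P)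
    {f : Ξ → ℝ≥0∞} (hf : Measurable f) {C : ℝ≥0∞} (hC : C ≠ ∞) (hfC : ∀ ξ, f ξ ≤ C) :
    ∀ᵐ ω ∂P, Tendsto (fun N => sampleMean X f N ω) atTop (𝓝 (∫⁻ ξ, f ξ ∂μ)) := by
  have hf_ne_top : ∀ ξ, f ξ ≠ ∞ := fun ξ => ne_top_of_le_ne_top hC (hfC ξ)
  set Y : ℕ → Ω → ℝ := fun i ω => (f (X i ω)).toReal
  have hident : ∀ i, IdentDistrib (Y i) (Y 0) P P := fun i =>
    (⟨(hX i).aemeasurable, (hX 0).aemeasurable, by rw [hlaw, hlaw]⟩ :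
      IdentDistrib (X i) (X 0) P P).comp hf.ennreal_toReal
  have hint : Integrable (Y 0) P :=
    Integrable.of_bound (hf.ennreal_toReal.comp (hX 0)).aestronglyMeasurable C.toReal
      (ae_of_all _ fun ω => by
        simpa [Y] using ENNReal.toReal_mono hC (hfC (X 0 ω)))
  have hlim : ENNReal.ofReal (P[Y 0]) = ∫⁻ ξ, f ξ ∂μ := by
    have hfin : ∫⁻ ω, f (X 0 ω) ∂P ≠ ∞ :=
      ne_top_of_le_ne_top hC <| (lintegral_mono fun ω => hfC _).trans (by simp)
    change ENNReal.ofReal (∫ ω, (f (X 0 ω)).toReal ∂P) = _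
    rw [integral_toReal (f := fun ω => f (X 0 ω)) (hf.comp (hX 0)).aemeasurable
      (ae_of_all _ fun ω => (hf_ne_top _).lt_top), ENNReal.ofReal_toReal hfin, ← hlaw 0,
      lintegral_map hf (hX 0)]
  filter_upwards [strong_law_ae_real Y hint
    (fun i j hij => (hindep hij).comp hf.ennreal_toReal hf.ennreal_toReal) hident] with ω hω
  have hmean : ∀ N : ℕ,
      ENNReal.ofReal ((∑ i ∈ Finset.range N, Y i ω) / N) = sampleMean X f N ω := by
    intro N
    rcases N.eq_zero_or_pos with rfl | hN
    · simp [sampleMean]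
    rw [ENNReal.ofReal_div_of_pos (by positivity),
      ENNReal.ofReal_sum_of_nonneg fun _ _ => ENNReal.toReal_nonneg, ENNReal.ofReal_natCast,
      sampleMean, ENNReal.div_eq_inv_mul]
    simp only [ENNReal.ofReal_toReal (hf_ne_top _)]
  rw [← hlim, funext fun N => (hmean N).symm]
  exact (ENNReal.continuous_ofReal.tendsto _).comp hω

theorem ae_lintegral_le_liminf_sampleMean (hX : ∀ i, Measurable (X i))
    (hlaw : ∀ i, P.map (X i) = μ) (hindep : Pairwise fun i j => IndepFun (X i) (X j) P)
    {f : Ξ → ℝ≥0∞} (hf : Measurable f) :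
    ∀ᵐ ω ∂P, ∫⁻ ξ, f ξ ∂μ ≤ atTop.liminf fun N => sampleMean X f N ω := by
  have htrunc : ∀ᵐ ω ∂P, ∀ k : ℕ, Tendsto (fun N => sampleMean X (fun ξ => min (f ξ) k) N ω)
      atTop (𝓝 (∫⁻ ξ, min (f ξ) k ∂μ)) :=
    ae_all_iff.2 fun k => ae_tendsto_sampleMean_of_le hX hlaw hindep
      (hf.min measurable_const) (ENNReal.natCast_ne_top k) fun ξ => min_le_right _ _
  filter_upwards [htrunc] with ω hω
  calc ∫⁻ ξ, f ξ ∂μ = ⨆ k : ℕ, ∫⁻ ξ, min (f ξ) k ∂μ := by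
        rw [← lintegral_iSup (fun k => hf.min measurable_const)
          fun k k' hkk' ξ => min_le_min_left _ (Nat.mono_cast hkk')]
        congr with ξ
        rw [← inf_iSup_eq, ENNReal.iSup_natCast, inf_top_eq]
    _ ≤ atTop.liminf fun N => sampleMean X f N ω :=
        iSup_le fun k => (hω k).liminf_eq.symm.le.trans <|
          liminf_le_liminf <| .of_forall fun N =>
            sampleMean_mono X (fun ξ => min_le_left _ _) N ω

theorem ae_lintegral_le_liminf_sampleMean_of_lowerSemicontinuous {T : Type*}
    [TopologicalSpace T] [SecondCountableTopology T] (hX : ∀ i, Measurable (X i))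
    (hlaw : ∀ i, P.map (X i) = μ) (hindep : Pairwise fun i j => IndepFun (X i) (X j) P)
    {h : T → Ξ → ℝ≥0∞} (hlsc : ∀ ξ, LowerSemicontinuous (h · ξ))
    (hmeas : ∀ s, IsOpen s → Measurable fun ξ => ⨅ y ∈ s, h y ξ) :
    ∀ᵐ ω ∂P, ∀ (w : ℕ → T) (w₀ : T), Tendsto w atTop (𝓝 w₀) →
      ∫⁻ ξ, h w₀ ξ ∂μ ≤ atTop.liminf fun N => sampleMean X (h (w N)) N ω := by
  obtain ⟨b, hbc, -, hb⟩ := exists_countable_basis T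
  have hae : ∀ᵐ ω ∂P, ∀ s ∈ b, ∫⁻ ξ, ⨅ y ∈ s, h y ξ ∂μ ≤
      atTop.liminf fun N => sampleMean X (fun ξ => ⨅ y ∈ s, h y ξ) N ω :=
    (ae_ball_iff hbc).2 fun s hs =>
      ae_lintegral_le_liminf_sampleMean hX hlaw hindep (hmeas s (hb.isOpen hs))
  filter_upwards [hae] with ω hω w w₀ hw
  have : Countable {s // s ∈ b ∧ w₀ ∈ s} := (hbc.mono fun _ hs => hs.1).to_subtype
  have hdir : Directed (· ≤ ·)
      fun s : {s // s ∈ b ∧ w₀ ∈ s} => fun ξ => ⨅ y ∈ (s : Set T), h y ξ := by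
    rintro ⟨s₁, hs₁, hw₁⟩ ⟨s₂, hs₂, hw₂⟩
    obtain ⟨s, hs, hw₀s, hsub⟩ := hb.exists_subset_inter s₁ hs₁ s₂ hs₂ w₀ ⟨hw₁, hw₂⟩
    exact ⟨⟨s, hs, hw₀s⟩, fun ξ => biInf_mono fun y hy => (hsub hy).1,
      fun ξ => biInf_mono fun y hy => (hsub hy).2⟩
  calc ∫⁻ ξ, h w₀ ξ ∂μ
      ≤ ∫⁻ ξ, ⨆ s : {s // s ∈ b ∧ w₀ ∈ s}, ⨅ y ∈ (s : Set T), h y ξ ∂μ :=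
        lintegral_mono fun ξ =>
          LowerSemicontinuousAt.le_iSup_iInf_of_isTopologicalBasis (hlsc ξ w₀) hb
    _ = ⨆ s : {s // s ∈ b ∧ w₀ ∈ s}, ∫⁻ ξ, ⨅ y ∈ (s : Set T), h y ξ ∂μ :=
        lintegral_iSup_directed (fun s => (hmeas _ (hb.isOpen s.2.1)).aemeasurable) hdir
    _ ≤ atTop.liminf fun N => sampleMean X (h (w N)) N ω := by
        refine iSup_le fun ⟨s, hs, hw₀s⟩ => (hω s hs).trans (liminf_le_liminf ?_)
        filter_upwards [hw (hb.mem_nhds hs hw₀s)] with N hN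
        exact sampleMean_mono X (fun ξ => biInf_le (h · ξ) hN) N ω

end SampleMean

namespace StandingSetup

variable {X W R R₀ Ξ Ω : Type*}
    [NormedAddCommGroup X] [NormedSpace ℝ X]
    [NormedAddCommGroup W] [NormedSpace ℝ W]
    [NormedAddCommGroup R] [NormedSpace ℝ R]
    [NormedAddCommGroup R₀] [NormedSpace ℝ R₀]
    [MeasurableSpace R] [BorelSpace R] [MeasurableSpace R₀] [BorelSpace R₀]
    [MetricSpace Ξ] [MeasurableSpace Ξ] [BorelSpace Ξ]
    [MeasurableSpace Ω]
    (S : StandingSetup X W R R₀ Ξ Ω)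

theorem pairwise_indepFun_samp : Pairwise fun i j => IndepFun (S.samp i) (S.samp j) S.P :=
  fun _ _ hij => S.samp_indep.indepFun hij

theorem ae_F_le_liminf_FN [SecondCountableTopology W] :
    ∀ᵐ ω ∂S.P, ∀ (u₀ : StrongDual ℝ X) (useq : ℕ → StrongDual ℝ X), WSTendsto useq u₀ →
      S.F u₀ ≤ atTop.liminf fun N => S.FN N ω (useq N) := by
  have := S.hP
  filter_upwards [ae_lintegral_le_liminf_sampleMean_of_lowerSemicontinuous S.samp_meas
    S.samp_law S.pairwise_indepFun_samp
    (fun ξ => ENNReal.continuous_ofReal.comp_lowerSemicontinuous (S.J_lsc ξ) ENNReal.ofReal_mono)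
    fun _ hs => measurable_biInf_ofReal_of_effros S.J_effros hs] with ω hω u₀ useq hu
  exact hω _ _ (S.B_wsc useq u₀ hu)

theorem ae_lintegral_iInd_Uset_le_liminf [SecondCountableTopology W] :
    ∀ᵐ ω ∂S.P, ∀ (u₀ : StrongDual ℝ X) (useq : ℕ → StrongDual ℝ X),
      S.ψ u₀ ≠ ⊤ → (∀ n, S.ψ (useq n) ≠ ⊤) → WSTendsto useq u₀ →
      ∫⁻ ξ, iInd (S.Uset ξ) u₀ ∂S.μ ≤
        atTop.liminf fun N => sampleMean S.samp (fun ξ => iInd (S.Uset ξ) (useq N)) N ω := by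
  have := S.hP
  set T := S.B '' {u | S.ψ u ≠ ⊤}
  set h : ℕ → T → Ξ → ℝ≥0∞ := fun k w ξ => k * Metric.infEDist (S.G w ξ) S.K
  have hcont : ∀ k ξ, Continuous (h k · ξ) := fun k ξ =>
    (ENNReal.continuous_const_mul (ENNReal.natCast_ne_top k)).comp
      (Metric.continuous_infEDist.comp (S.G_contOn ξ).domRestrict)
  have hmeas : ∀ k w, Measurable (h k w) := fun k w =>
    (Metric.continuous_infEDist.measurable.comp (S.G_meas w)).const_mul _
  have hind : ∀ u ξ,
      iInd (S.Uset ξ) u = ⨆ k : ℕ, (k : ℝ≥0∞) * Metric.infEDist (S.G (S.B u) ξ) S.K :=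
    fun u ξ => iInd_eq_iSup_natCast_mul_infEDist S.K_closed (S.G (S.B u) ξ)
  have hae := ae_all_iff.2 fun k => ae_lintegral_le_liminf_sampleMean_of_lowerSemicontinuous
    S.samp_meas S.samp_law S.pairwise_indepFun_samp (fun ξ => (hcont k ξ).lowerSemicontinuous)
    fun _ hs => measurable_biInf_of_upperSemicontinuous
      (fun ξ => (hcont k ξ).upperSemicontinuous) (hmeas k) hs
  filter_upwards [hae] with ω hω u₀ useq hu₀ huseq hu
  set w₀ : T := ⟨S.B u₀, u₀, hu₀, rfl⟩
  set w : ℕ → T := fun N => ⟨S.B (useq N), useq N, huseq N, rfl⟩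
  have hw : Tendsto w atTop (𝓝 w₀) := tendsto_subtype_rng.2 (S.B_wsc useq u₀ hu)
  have hle : ∀ k N, h k (w N) ≤ fun ξ => iInd (S.Uset ξ) (useq N) := fun k N ξ => by
    show h k (w N) ξ ≤ iInd (S.Uset ξ) (useq N)
    rw [hind]
    exact le_iSup (fun k : ℕ => (k : ℝ≥0∞) * _) k
  calc ∫⁻ ξ, iInd (S.Uset ξ) u₀ ∂S.μ = ⨆ k, ∫⁻ ξ, h k w₀ ξ ∂S.μ := by
        simp_rw [hind]
        exact lintegral_iSup (hmeas · w₀) fun k k' hkk' ξ => by gcongr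
    _ ≤ _ := iSup_le fun k => (hω k w w₀ hw).trans <|
        liminf_le_liminf <| .of_forall fun N => sampleMean_mono _ (hle k N) N ω

end StandingSetup

theorem SAA_objectives_epi_liminf_almost_surely_general {X W R R₀ Ξ Ω : Type*}
    [NormedAddCommGroup X] [NormedSpace ℝ X]
    [NormedAddCommGroup W] [NormedSpace ℝ W] [SeparableSpace W]
    [NormedAddCommGroup R] [NormedSpace ℝ R]
    [NormedAddCommGroup R₀] [NormedSpace ℝ R₀]
    [MeasurableSpace R] [BorelSpace R] [MeasurableSpace R₀] [BorelSpace R₀]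
    [MetricSpace Ξ]
    [MeasurableSpace Ξ] [BorelSpace Ξ] [MeasurableSpace Ω]
    (S : StandingSetup X W R R₀ Ξ Ω) :
    ∀ᵐ ω ∂S.P, ∀ (u₀ : StrongDual ℝ X) (useq : ℕ → StrongDual ℝ X),
      S.ψ u₀ ≠ ⊤ → (∀ n, S.ψ (useq n) ≠ ⊤) → WSTendsto useq u₀ →
      S.F u₀ ≤ (atTop.liminf fun N => S.FN N ω (useq N)) ∧
      (∫⁻ ξ, iInd (S.Uset ξ) u₀ ∂S.μ) ≤ atTop.liminf fun N : ℕ =>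
        (N : ℝ≥0∞)⁻¹ * ∑ i ∈ Finset.range N, iInd (S.Uset (S.samp i ω)) (useq N) := by
  filter_upwards [S.ae_F_le_liminf_FN, S.ae_lintegral_iInd_Uset_le_liminf]
    with ω hF hI u₀ useq hu₀ huseq hu
  exact ⟨hF u₀ useq hu, hI u₀ useq hu₀ huseq hu⟩

/-- With probability one: for every `u ∈ dom ψ` and every sequence
`(u_N) ⊂ dom ψ` with `u_N ⇀* u`, one has `liminf F̂_N(u_N) ≥ F(u)` and
`liminf (1/N) ∑ I_{𝒰(ξⁱ)}(u_N) ≥ E[I_{𝒰(ξ)}(u)]`. -/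
theorem SAA_objectives_epi_liminf_almost_surely {X W R R₀ Ξ Ω : Type*}
    [NormedAddCommGroup X] [NormedSpace ℝ X] [SeparableSpace X] [CompleteSpace X]
    [NormedAddCommGroup W] [NormedSpace ℝ W] [SeparableSpace W] [CompleteSpace W]
    [NormedAddCommGroup R] [NormedSpace ℝ R] [SeparableSpace R] [CompleteSpace R]
    [NormedAddCommGroup R₀] [NormedSpace ℝ R₀] [SeparableSpace R₀] [CompleteSpace R₀]
    [MeasurableSpace R] [BorelSpace R] [MeasurableSpace R₀] [BorelSpace R₀]
    [MetricSpace Ξ] [CompleteSpace Ξ] [SeparableSpace Ξ]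
    [MeasurableSpace Ξ] [BorelSpace Ξ] [MeasurableSpace Ω]
    (S : StandingSetup X W R R₀ Ξ Ω) :
    ∀ᵐ ω ∂S.P, ∀ (u₀ : StrongDual ℝ X) (useq : ℕ → StrongDual ℝ X),
      S.ψ u₀ ≠ ⊤ → (∀ n, S.ψ (useq n) ≠ ⊤) → WSTendsto useq u₀ →
      S.F u₀ ≤ (atTop.liminf fun N => S.FN N ω (useq N)) ∧
      (∫⁻ ξ, iInd (S.Uset ξ) u₀ ∂S.μ) ≤ atTop.liminf fun N : ℕ =>
        (N : ℝ≥0∞)⁻¹ * ∑ i ∈ Finset.range N, iInd (S.Uset (S.samp i ω)) (useq N) :=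
  SAA_objectives_epi_liminf_almost_surely_general S
end
end

section
/- Under the standing setup (Assumption 1) and Assumption 3, suppose the cone 𝒦 := {r ∈ C(Ξ;R) : r(ξ) ∈ K for all ξ ∈ Ξ} has nonempty interior, and let u* be a local optimum of problem (P) at which the constraint qualification (CQ) holds: there exists û ∈ dom ψ with 𝒢(u*) + D𝒢(u*)(û − u*) ∈ int 𝒦. Then there exists a Lagrange multiplier λ* ∈ C(Ξ;R)* such that 0 ∈ DF(u*) + ∂ψ(u*) + D𝒢(u*)*λ*, λ* ∈ 𝒦⁻, and ⟨λ*, 𝒢(u*)⟩ = 0. -/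
open MeasureTheory Filter Topology TopologicalSpace
open scoped ENNReal

noncomputable section

/-- Assumption 3 of the paper: compact sample space, smooth objective and constraint. -/
structure Assumption3 {X W R R₀ Ξ Ω : Type*}
    [NormedAddCommGroup X] [NormedSpace ℝ X]
    [NormedAddCommGroup W] [NormedSpace ℝ W]
    [NormedAddCommGroup R] [NormedSpace ℝ R]
    [NormedAddCommGroup R₀] [NormedSpace ℝ R₀]
    [MeasurableSpace R] [BorelSpace R] [MeasurableSpace R₀] [BorelSpace R₀]
    [MetricSpace Ξ] [CompactSpace Ξ] [MeasurableSpace Ξ] [BorelSpace Ξ]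
    [MeasurableSpace Ω]
    (S : StandingSetup X W R R₀ Ξ Ω) : Type _ where
  /-- the open set `U₀ ⊃ dom ψ` -/
  U₀ : Set (StrongDual ℝ X)
  U₀_open : IsOpen U₀
  dom_sub : {u | S.ψ u ≠ ⊤} ⊆ U₀
  /-- the open set `W₀ ⊃ B(U₀)` -/
  W₀ : Set W
  W₀_open : IsOpen W₀
  BU₀_sub : S.B '' U₀ ⊆ W₀
  /-- the Fréchet derivative `D_w𝒥` of the objective integrand -/
  DJ : W → Ξ → (W →L[ℝ] ℝ)
  DJ_deriv : ∀ ξ : Ξ, ∀ w ∈ W₀, HasFDerivAt (fun w' => S.J w' ξ) (DJ w ξ) w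
  DJ_cont : ∀ ξ : Ξ, ContinuousOn (fun w => DJ w ξ) W₀
  DJ_meas : ∀ w ∈ W₀, ∀ h : W, Measurable fun ξ => DJ w ξ h
  /-- the integrable bound `L` on `‖D_w𝒥‖` -/
  L : Ξ → ℝ
  L_int : Integrable L S.μ
  DJ_bound : ∀ w ∈ W₀, ∀ ξ : Ξ, ‖DJ w ξ‖ ≤ L ξ
  /-- the Fréchet derivative `D_w𝒢` of the constraint map -/
  DG : W → Ξ → (W →L[ℝ] R)
  DG_deriv : ∀ ξ : Ξ, ∀ w ∈ W₀, HasFDerivAt (fun w' => S.G w' ξ) (DG w ξ) w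
  DG_meas : ∀ w ∈ W₀, ∀ h : W, Measurable fun ξ => DG w ξ h
  /-- joint continuity of `𝒢` on `B(U₀) × Ξ` -/
  G_jcont : ContinuousOn (fun p : W × Ξ => S.G p.1 p.2) ((S.B '' U₀) ×ˢ Set.univ)
  /-- joint continuity of `D_w𝒢` on `B(U₀) × Ξ` -/
  DG_jcont : ContinuousOn (fun p : W × Ξ => DG p.1 p.2) ((S.B '' U₀) ×ˢ Set.univ)

namespace StandingSetup

variable {X W R R₀ Ξ Ω : Type*}
    [NormedAddCommGroup X] [NormedSpace ℝ X]
    [NormedAddCommGroup W] [NormedSpace ℝ W]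
    [NormedAddCommGroup R] [NormedSpace ℝ R]
    [NormedAddCommGroup R₀] [NormedSpace ℝ R₀]
    [MeasurableSpace R] [BorelSpace R] [MeasurableSpace R₀] [BorelSpace R₀]
    [MetricSpace Ξ] [CompactSpace Ξ] [MeasurableSpace Ξ] [BorelSpace Ξ]
    [MeasurableSpace Ω]
    (S : StandingSetup X W R R₀ Ξ Ω)

/-- the cone `𝒦 = {r ∈ C(Ξ;R) ∣ r(ξ) ∈ K for all ξ}` -/
def coneC : Set (ContinuousMap Ξ R) := {r | ∀ ξ, r ξ ∈ S.K}

/-- the convex subdifferential `∂ψ(u) ⊂ U*` of the regularizer -/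
def subdiff (u : StrongDual ℝ X) :
    Set (StrongDual ℝ (StrongDual ℝ X)) :=
  {η | S.ψ u ≠ ⊤ ∧ ∀ v, S.ψ v ≠ ⊤ → (S.ψ u).toReal + η (v - u) ≤ (S.ψ v).toReal}

variable (A : Assumption3 S)

/-- the KKT conditions of problem (P) at `(u, λ)`:
`0 ∈ DF(u) + ∂ψ(u) + D𝒢(u)*λ`, `λ ∈ 𝒦⁻`, `⟨λ, 𝒢(u)⟩ = 0`. -/
def KKTP (Gc : StrongDual ℝ X → ContinuousMap Ξ R)
    (DGc : StrongDual ℝ X → StrongDual ℝ X → ContinuousMap Ξ R)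
    (u : StrongDual ℝ X) (lam : StrongDual ℝ (ContinuousMap Ξ R)) : Prop :=
  (∃ η ∈ S.subdiff u, ∀ h : StrongDual ℝ X,
      (∫ ξ, A.DJ (S.B u) ξ (S.B h) ∂S.μ) + η h + lam (DGc u h) = 0) ∧
  (∀ k : ContinuousMap Ξ R, (∀ ξ, k ξ ∈ S.K) → lam k ≤ 0) ∧
  lam (Gc u) = 0

/-- the aggregated SAA KKT conditions (4.6) at `(u, λ)` for sample size `N` -/
def AggKKT (Gc : StrongDual ℝ X → ContinuousMap Ξ R)
    (DGc : StrongDual ℝ X → StrongDual ℝ X → ContinuousMap Ξ R)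
    (N : ℕ) (ω : Ω) (u : StrongDual ℝ X)
    (lam : StrongDual ℝ (ContinuousMap Ξ R)) : Prop :=
  (∃ η ∈ S.subdiff u, ∀ h : StrongDual ℝ X,
      ((N : ℝ)⁻¹ * ∑ i ∈ Finset.range N, A.DJ (S.B u) (S.samp i ω) (S.B h))
        + η h + lam (DGc u h) = 0) ∧
  (∀ k : ContinuousMap Ξ R, (∀ ξ, k ξ ∈ S.K) → lam k ≤ 0) ∧
  lam (Gc u) = 0 ∧
  ∀ i ∈ Finset.range N, S.G (S.B u) (S.samp i ω) ∈ S.K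

/-- the constraint qualification (CQ) of the paper at `u`:
there is `û ∈ dom ψ` with `𝒢(u) + D𝒢(u)(û − u) ∈ int 𝒦`. -/
def CQ (Gc : StrongDual ℝ X → ContinuousMap Ξ R)
    (DGc : StrongDual ℝ X → StrongDual ℝ X → ContinuousMap Ξ R)
    (u : StrongDual ℝ X) : Prop :=
  ∃ uhat, S.ψ uhat ≠ ⊤ ∧ Gc u + DGc u (uhat - u) ∈ interior S.coneC

end StandingSetup

/-!
The multiplier comes from separating the origin of `ℝ × C(Ξ;R)` from the open convex set of
pairs `(a, 𝒢(u*) + D𝒢(u*)(v - u*) + s 𝒢(u*) - k)` with `v ∈ dom ψ`, `s ≤ 0`, `k ∈ int 𝒦` and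
`a > DF(u*)(v - u*) + ψ(v) - ψ(u*)`. The origin is not in this set by linearized optimality:
if `𝒢(u*) + D𝒢(u*)(v - u*) + s 𝒢(u*)` is an interior point of `𝒦`, then, since `D𝒢` is uniformly
continuous on the compact set `[u*, v] × Ξ`, the points `u* + t (v - u*)` are feasible for small
`t > 0` (the term `s 𝒢(u*)` is absorbed by `𝒢(u*, ξ) ∈ K`), and local optimality, convexity of `ψ`
and differentiation under the integral sign give `DF(u*)(v - u*) + ψ(v) - ψ(u*) ≥ 0`. The CQ
point makes the `ℝ`-component of the separating functional negative, so that it can be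
normalized, and complementary slackness follows from letting `s → -∞` and taking `v = u*`.
-/

theorem le_of_forall_pos_add_mul_le {a b c : ℝ} (h : ∀ t > 0, a + t * b ≤ c) : a ≤ c := by
  refine le_of_forall_pos_lt_add fun ε hε => ?_
  have ht : 0 < ε / (|b| + 1) := by positivity
  have hbt : -(ε / (|b| + 1) * b) < ε := by
    calc -(ε / (|b| + 1) * b) ≤ ε / (|b| + 1) * |b| := by
          nlinarith [mul_le_mul_of_nonneg_left (neg_le_abs b) ht.le]
      _ < ε / (|b| + 1) * (|b| + 1) := by gcongr; linarith
      _ = ε := by field_simp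
  linarith [h _ ht]

theorem nonpos_of_forall_pos_add_mul_le {a b c : ℝ} (h : ∀ t > 0, a + t * b ≤ c) : b ≤ 0 := by
  by_contra! hb
  have := h ((|c - a| + 1) / b) (by positivity)
  rw [div_mul_cancel₀ _ hb.ne'] at this
  linarith [le_abs_self (c - a)]

section LagrangeMultiplier

variable {E Y : Type*} [AddCommGroup E] [Module ℝ E]
  [TopologicalSpace Y] [AddCommGroup Y] [IsTopologicalAddGroup Y] [Module ℝ Y]
  {C : Set E} {φ : E → ℝ} {T : E →ₗ[ℝ] Y} {𝒦 : Set Y} {g : Y} {u₀ v₀ : E}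

variable (C φ T 𝒦 g u₀) in
def linearizedImageSet : Set (ℝ × Y) :=
  {p | ∃ v ∈ C, ∃ s ≤ (0 : ℝ), φ v < p.1 ∧ g + T (v - u₀) + s • g - p.2 ∈ interior 𝒦}

theorem isOpen_linearizedImageSet : IsOpen (linearizedImageSet C φ T 𝒦 g u₀) := by
  have : linearizedImageSet C φ T 𝒦 g u₀ = ⋃ v ∈ C, ⋃ s ∈ Set.Iic (0 : ℝ),
      Set.Ioi (φ v) ×ˢ ((g + T (v - u₀) + s • g - ·) ⁻¹' interior 𝒦) := by
    ext p
    simp only [linearizedImageSet, Set.mem_ofPred_eq, Set.mem_iUnion, Set.mem_prod,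
      Set.mem_Ioi, Set.mem_preimage, Set.mem_Iic, exists_prop]
  rw [this]
  exact isOpen_biUnion fun v _ => isOpen_biUnion fun s _ =>
    isOpen_Ioi.prod (isOpen_interior.preimage (continuous_const.sub continuous_id))

variable [ContinuousSMul ℝ Y]

theorem convex_linearizedImageSet (hφ : ConvexOn ℝ C φ) (h𝒦 : Convex ℝ 𝒦) :
    Convex ℝ (linearizedImageSet C φ T 𝒦 g u₀) := by
  refine convex_iff_forall_pos.2 ?_
  rintro ⟨a₁, k₁⟩ ⟨v₁, hv₁, s₁, hs₁, hφ₁, hk₁⟩ ⟨a₂, k₂⟩ ⟨v₂, hv₂, s₂, hs₂, hφ₂, hk₂⟩ a b ha hb hab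
  refine ⟨a • v₁ + b • v₂, hφ.1 hv₁ hv₂ ha.le hb.le hab, a * s₁ + b * s₂, by nlinarith, ?_, ?_⟩
  · calc φ (a • v₁ + b • v₂) ≤ a * φ v₁ + b * φ v₂ := hφ.2 hv₁ hv₂ ha.le hb.le hab
      _ < a * a₁ + b * a₂ := by gcongr
  · have hcomb : a • v₁ + b • v₂ - u₀ = a • (v₁ - u₀) + b • (v₂ - u₀) := by
      linear_combination (norm := module) hab • u₀
    convert h𝒦.interior hk₁ hk₂ ha.le hb.le hab using 1
    simp only [Prod.smul_mk, Prod.mk_add_mk, hcomb, map_add, map_smul]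
    linear_combination (norm := module) hab.symm • g

theorem exists_dual_le_of_linearized_optimality (hφ : ConvexOn ℝ C φ) (h𝒦 : Convex ℝ 𝒦)
    (hv₀ : v₀ ∈ C) (hslater : g + T (v₀ - u₀) ∈ interior 𝒦)
    (hopt : ∀ v ∈ C, ∀ s ≤ (0 : ℝ), g + T (v - u₀) + s • g ∈ interior 𝒦 → 0 ≤ φ v) :
    ∃ Λ : StrongDual ℝ Y, ∀ v ∈ C, ∀ s ≤ (0 : ℝ), ∀ k ∈ interior 𝒦,
      Λ (g + T (v - u₀) + s • g - k) ≤ φ v := by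
  have h0 : (0 : ℝ × Y) ∉ linearizedImageSet C φ T 𝒦 g u₀ := by
    rintro ⟨v, hv, s, hs, hφv, hk⟩
    rw [Prod.snd_zero, sub_zero] at hk
    exact (hopt v hv s hs hk).not_gt hφv
  obtain ⟨f, hf⟩ := geometric_hahn_banach_open_point (convex_linearizedImageSet hφ h𝒦)
    isOpen_linearizedImageSet h0
  set θ := f (1, 0)
  set Λ₀ := f.comp (ContinuousLinearMap.inr ℝ ℝ Y)
  have hf_apply : ∀ a y, f (a, y) = a * θ + Λ₀ y := fun a y => by
    rw [show ((a, y) : ℝ × Y) = a • (1, 0) + (0, y) by simp, map_add, map_smul, smul_eq_mul]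
    rfl
  have hsep : ∀ v ∈ C, ∀ s ≤ (0 : ℝ), ∀ k ∈ interior 𝒦, ∀ ε > 0,
      (φ v + ε) * θ + Λ₀ (g + T (v - u₀) + s • g - k) < 0 := fun v hv s hs k hk ε hε => by
    have := hf (_, _) ⟨v, hv, s, hs, lt_add_of_pos_right _ hε, by rwa [sub_sub_cancel]⟩
    rwa [hf_apply, map_zero] at this
  have hθ : θ < 0 := by
    have := hsep v₀ hv₀ 0 le_rfl _ hslater (|φ v₀| + 1) (by positivity)
    rw [zero_smul, add_zero, sub_self, map_zero, add_zero] at this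
    exact neg_of_mul_neg_right this (by linarith [neg_abs_le (φ v₀)])
  refine ⟨(-θ)⁻¹ • Λ₀, fun v hv s hs k hk => le_of_forall_pos_lt_add fun ε hε => ?_⟩
  have := hsep v hv s hs k hk ε hε
  rw [smul_apply, smul_eq_mul, inv_mul_lt_iff₀ (by linarith)]
  linarith

theorem exists_lagrange_multiplier_of_linearized_optimality (hφ : ConvexOn ℝ C φ)
    (h𝒦 : Convex ℝ 𝒦) (h𝒦_smul : ∀ c : ℝ, 0 ≤ c → ∀ k ∈ 𝒦, c • k ∈ 𝒦)
    (hu₀ : u₀ ∈ C) (hφu₀ : φ u₀ = 0) (hv₀ : v₀ ∈ C) (hslater : g + T (v₀ - u₀) ∈ interior 𝒦)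
    (hopt : ∀ v ∈ C, ∀ s ≤ (0 : ℝ), g + T (v - u₀) + s • g ∈ interior 𝒦 → 0 ≤ φ v) :
    ∃ Λ : StrongDual ℝ Y, (∀ k ∈ 𝒦, Λ k ≤ 0) ∧ Λ g = 0 ∧ ∀ v ∈ C, 0 ≤ φ v + Λ (T (v - u₀)) := by
  obtain ⟨Λ, hΛ⟩ := exists_dual_le_of_linearized_optimality hφ h𝒦 hv₀ hslater hopt
  set k₀ := g + T (v₀ - u₀)
  have hsmul_mem : ∀ t > (0 : ℝ), t • k₀ ∈ interior 𝒦 := fun t ht =>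
    interior_mono (Set.smul_set_subset_iff.2 fun k hk => h𝒦_smul t ht.le k hk)
      (by rw [interior_smul₀ ht.ne']; exact Set.smul_mem_smul_set hslater)
  have hstat : ∀ v ∈ C, Λ (g + T (v - u₀)) ≤ φ v := fun v hv =>
    le_of_forall_pos_add_mul_le (b := -Λ k₀) fun t ht => by
      have := hΛ v hv 0 le_rfl _ (hsmul_mem t ht)
      rw [zero_smul, add_zero, map_sub, map_smul, smul_eq_mul] at this
      linarith
  have hslack_nonneg : 0 ≤ Λ g := by
    refine neg_nonpos.1 (nonpos_of_forall_pos_add_mul_le (a := 0) (c := φ v₀) fun t ht => ?_)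
    have := hΛ v₀ hv₀ (-t) (by linarith) k₀ hslater
    rw [add_sub_right_comm, sub_self, zero_add, map_smul, smul_eq_mul] at this
    linarith
  have hslack : Λ g = 0 := by
    refine le_antisymm ?_ hslack_nonneg
    simpa [hφu₀] using hstat u₀ hu₀
  have hcone : ∀ k ∈ 𝒦, 0 ≤ Λ k := fun k hk => by
    have := nonpos_of_forall_pos_add_mul_le (a := Λ k₀ / 2) (b := -(Λ k / 2)) (c := φ v₀)
      fun t ht => by
        have := hΛ v₀ hv₀ 0 le_rfl _ (h𝒦.combo_interior_self_mem_interior hslater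
          (h𝒦_smul t ht.le k hk) one_half_pos one_half_pos.le (add_halves 1))
        rw [zero_smul, add_zero] at this
        change Λ (k₀ - _) ≤ φ v₀ at this
        simp only [map_sub, map_add, map_smul, smul_eq_mul] at this
        linarith
    linarith
  refine ⟨-Λ, fun k hk => by simpa using hcone k hk, by simp [hslack], fun v hv => ?_⟩
  have := hstat v hv
  rw [map_add, hslack, zero_add] at this
  simp only [neg_apply]
  linarith

end LagrangeMultiplier

theorem eventually_norm_sub_sub_smul_le {Y F : Type*} [TopologicalSpace Y] [CompactSpace Y]
    [NormedAddCommGroup F] [NormedSpace ℝ F] {f f' : ℝ → Y → F}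
    (hf : ∀ y, ∀ t ∈ Set.Icc (0 : ℝ) 1, HasDerivWithinAt (f · y) (f' t y) (Set.Icc 0 1) t)
    (hf' : ContinuousOn (Function.uncurry f') (Set.Icc 0 1 ×ˢ Set.univ)) {c : ℝ} (hc : 0 < c) :
    ∀ᶠ t in 𝓝[>] 0, ∀ y, ‖f t y - f 0 y - t • f' 0 y‖ ≤ c * t := by
  obtain ⟨V, hV, hf'V⟩ := isCompact_univ.mem_uniformity_of_prod hf'
    (Set.left_mem_Icc.2 zero_le_one) (Metric.dist_mem_uniformity hc)
  obtain ⟨ε, hε, hεV⟩ := Metric.mem_nhdsWithin_iff.1 hV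
  filter_upwards [Ioo_mem_nhdsGT (lt_min hε one_pos)] with t ht y
  have hsub : Set.Icc 0 t ⊆ Set.Icc 0 1 :=
    Set.Icc_subset_Icc_right (ht.2.le.trans (min_le_right _ _))
  have hderiv : ∀ τ ∈ Set.Icc 0 t, HasDerivWithinAt (fun τ => f τ y - τ • f' 0 y)
      (f' τ y - f' 0 y) (Set.Icc 0 t) τ := fun τ hτ => by
    have h := ((hf y τ (hsub hτ)).mono hsub).sub ((hasDerivWithinAt_id τ _).smul_const (f' 0 y))
    rwa [one_smul] at h
  have hbound : ∀ τ ∈ Set.Ico 0 t, ‖f' τ y - f' 0 y‖ ≤ c := fun τ hτ => by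
    have hτV : τ ∈ V := hεV ⟨by
      rw [Metric.mem_ball, Real.dist_0_eq_abs, abs_of_nonneg hτ.1]
      exact hτ.2.trans (ht.2.trans_le (min_le_left _ _)), hsub (Set.Ico_subset_Icc_self hτ)⟩
    have h : dist (f' τ y) (f' 0 y) < c := hf'V τ hτV y trivial
    rw [dist_eq_norm] at h
    exact h.le
  simpa [sub_right_comm] using
    norm_image_sub_le_of_norm_deriv_le_segment' hderiv hbound t (Set.right_mem_Icc.2 ht.1.le)

theorem exists_clm_eq_integral_apply {α W : Type*} [MeasurableSpace α] {μ : Measure α}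
    [NormedAddCommGroup W] [NormedSpace ℝ W] {Φ : α → StrongDual ℝ W} {L : α → ℝ}
    (hΦ : ∀ w, AEStronglyMeasurable (fun a => Φ a w) μ) (hL : Integrable L μ)
    (hΦL : ∀ a, ‖Φ a‖ ≤ L a) :
    ∃ Ψ : StrongDual ℝ W, ∀ w, Ψ w = ∫ a, Φ a w ∂μ := by
  have hint : ∀ w, Integrable (fun a => Φ a w) μ := fun w =>
    (hL.mul_const ‖w‖).mono' (hΦ w) (Eventually.of_forall fun a =>
      (Φ a).le_of_opNorm_le (hΦL a) w)
  let Ψ : W →ₗ[ℝ] ℝ :=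
    { toFun := fun w => ∫ a, Φ a w ∂μ
      map_add' := fun w₁ w₂ => by simp only [map_add]; exact integral_add (hint w₁) (hint w₂)
      map_smul' := fun c w => by simp only [map_smul]; exact integral_smul c _ }
  refine ⟨Ψ.mkContinuous (∫ a, L a ∂μ) fun w => ?_, fun w => rfl⟩
  rw [← integral_mul_const]
  exact norm_integral_le_of_norm_le (hL.mul_const _) (Eventually.of_forall fun a =>
    (Φ a).le_of_opNorm_le (hΦL a) w)

theorem exists_clm_eq_apply_continuousMap {Y W F : Type*} [TopologicalSpace Y] [CompactSpace Y]
    [NormedAddCommGroup W] [NormedSpace ℝ W] [NormedAddCommGroup F] [NormedSpace ℝ F]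
    (Φ : C(Y, W →L[ℝ] F)) : ∃ T : W →L[ℝ] C(Y, F), ∀ w y, T w y = Φ y w := by
  let T : W →ₗ[ℝ] C(Y, F) :=
    { toFun := fun w =>
        ⟨fun y => Φ y w, (ContinuousLinearMap.apply ℝ F w).continuous.comp Φ.continuous⟩
      map_add' := fun w₁ w₂ => by ext y; exact map_add (Φ y) w₁ w₂
      map_smul' := fun c w => by ext y; exact map_smul (Φ y) c w }
  refine ⟨T.mkContinuous ‖Φ‖ fun w => (ContinuousMap.norm_le _ (by positivity)).2 fun y => ?_,
    fun w y => rfl⟩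
  exact (Φ y).le_of_opNorm_le (Φ.norm_coe_le_norm y) w

theorem exists_pos_add_mem_of_mem_interior {Y R : Type*} [TopologicalSpace Y] [CompactSpace Y]
    [NormedAddCommGroup R] {K : Set R} {k : C(Y, R)}
    (hk : k ∈ interior {f : C(Y, R) | ∀ y, f y ∈ K}) :
    ∃ δ > 0, ∀ y r, ‖r‖ < δ → k y + r ∈ K := by
  obtain ⟨δ, hδ, hball⟩ := Metric.mem_nhds_iff.1 (mem_interior_iff_mem_nhds.1 hk)
  refine ⟨δ, hδ, fun y r hr => ?_⟩
  have : k + ContinuousMap.const Y r ∈ Metric.ball k δ := by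
    rw [Metric.mem_ball, dist_eq_norm, add_sub_cancel_left]
    exact (ContinuousMap.norm_le _ (norm_nonneg r)).2 (fun _ => le_rfl) |>.trans_lt hr
  exact hball this y

namespace StandingSetup

variable {X W R R₀ Ξ Ω : Type*}
    [NormedAddCommGroup X] [NormedSpace ℝ X]
    [NormedAddCommGroup W] [NormedSpace ℝ W]
    [NormedAddCommGroup R] [NormedSpace ℝ R]
    [NormedAddCommGroup R₀] [NormedSpace ℝ R₀]
    [MeasurableSpace R] [BorelSpace R] [MeasurableSpace R₀] [BorelSpace R₀]
    [MetricSpace Ξ] [MeasurableSpace Ξ] [BorelSpace Ξ]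
    [MeasurableSpace Ω]
    (S : StandingSetup X W R R₀ Ξ Ω)

theorem continuous_B : Continuous S.B := by
  refine continuous_iff_seqContinuous.2 fun u u₀ hu => S.B_wsc u u₀ fun x => ?_
  exact ((ContinuousLinearMap.apply ℝ ℝ x).continuous.tendsto u₀).comp hu

def BL : StrongDual ℝ X →L[ℝ] W := ⟨S.B, S.continuous_B⟩

theorem convex_dom : Convex ℝ {u | S.ψ u ≠ ⊤} := by
  intro u hu v hv a b ha hb hab
  obtain rfl : b = 1 - a := by linarith
  refine ne_top_of_le_ne_top ?_ (S.ψ_convex u v a ha (by linarith))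
  exact ENNReal.add_ne_top.2 ⟨ENNReal.mul_ne_top ENNReal.ofReal_ne_top hu,
    ENNReal.mul_ne_top ENNReal.ofReal_ne_top hv⟩

theorem convexOn_toReal_ψ : ConvexOn ℝ {u | S.ψ u ≠ ⊤} fun u => (S.ψ u).toReal := by
  refine ⟨S.convex_dom, fun u hu v hv a b ha hb hab => ?_⟩
  obtain rfl : b = 1 - a := by linarith
  have hne : ENNReal.ofReal a * S.ψ u + ENNReal.ofReal (1 - a) * S.ψ v ≠ ⊤ :=
    ENNReal.add_ne_top.2 ⟨ENNReal.mul_ne_top ENNReal.ofReal_ne_top hu,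
      ENNReal.mul_ne_top ENNReal.ofReal_ne_top hv⟩
  have := ENNReal.toReal_mono hne (S.ψ_convex u v a ha (by linarith))
  rwa [ENNReal.toReal_add (ENNReal.mul_ne_top ENNReal.ofReal_ne_top hu)
    (ENNReal.mul_ne_top ENNReal.ofReal_ne_top hv), ENNReal.toReal_mul, ENNReal.toReal_mul,
    ENNReal.toReal_ofReal ha, ENNReal.toReal_ofReal hb] at this

theorem measurable_J (w : W) : Measurable (S.J w) := by
  refine measurable_of_Iic fun c => ?_
  -- the inclusion `⊇` is lower semicontinuity of `S.J · ξ` at `w`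
  have : S.J w ⁻¹' Set.Iic c = ⋂ n : ℕ, {ξ | ∃ p ∈ Metric.ball w (1 / (n + 1)) ×ˢ
      Set.Iio (c + 1 / (n + 1)), S.J p.1 ξ ≤ p.2} := by
    ext ξ
    simp only [Set.mem_preimage, Set.mem_Iic, Set.mem_iInter, Set.mem_ofPred_eq]
    refine ⟨fun h n => ⟨(w, c), ⟨Metric.mem_ball_self Nat.one_div_pos_of_nat,
      lt_add_of_pos_right c Nat.one_div_pos_of_nat⟩, h⟩, fun h => ?_⟩
    refine le_of_forall_pos_lt_add fun ε hε => ?_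
    obtain ⟨δ, hδ, hJ⟩ := Metric.eventually_nhds_iff.1
      (S.J_lsc ξ w _ (sub_lt_self (S.J w ξ) (half_pos hε)))
    obtain ⟨n, hn⟩ := exists_nat_one_div_lt (lt_min hδ (half_pos hε))
    obtain ⟨⟨w', a⟩, ⟨hw', ha⟩, hJa⟩ := h n
    have := hJ ((Metric.mem_ball.1 hw').trans (hn.trans_le (min_le_left _ _)))
    have := hn.trans_le (min_le_right _ _)
    simp only [Set.mem_Iio] at ha
    linarith
  rw [this]
  exact MeasurableSet.iInter fun n => S.J_effros _ (Metric.isOpen_ball.prod isOpen_Iio)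

theorem add_mem_K {a b : R} (ha : a ∈ S.K) (hb : b ∈ S.K) : a + b ∈ S.K := by
  simpa [smul_add, smul_smul] using
    S.K_cone 2 _ zero_le_two (S.K_convex ha hb one_half_pos.le one_half_pos.le (add_halves 1))

theorem add_smul_sub_sub_smul_mem_K {x y : R} (hx : x ∈ S.K) (hy : y ∈ S.K) {t s : ℝ}
    (ht : t ∈ Set.Icc (0 : ℝ) 1) (hs : s ≤ 0) : x + t • (y - x - s • x) ∈ S.K := by
  rw [show x + t • (y - x - s • x) = ((1 - t) • x + t • y) + (-(t * s)) • x by module]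
  exact S.add_mem_K (S.K_convex hx hy (by linarith [ht.2]) ht.1 (by ring))
    (S.K_cone _ _ (by nlinarith [ht.1]) hx)

theorem convex_coneC : Convex ℝ S.coneC := fun _ h₁ _ h₂ _ _ ha hb hab ξ =>
  S.K_convex (h₁ ξ) (h₂ ξ) ha hb hab

theorem smul_mem_coneC (c : ℝ) (hc : 0 ≤ c) (k : C(Ξ, R)) (hk : k ∈ S.coneC) :
    c • k ∈ S.coneC := fun ξ => S.K_cone c (k ξ) hc (hk ξ)

theorem add_smul_sub_mem_dom {u v : StrongDual ℝ X} (hu : S.ψ u ≠ ⊤) (hv : S.ψ v ≠ ⊤) {t : ℝ}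
    (ht : t ∈ Set.Icc (0 : ℝ) 1) : S.ψ (u + t • (v - u)) ≠ ⊤ :=
  S.convex_dom.add_smul_sub_mem hu hv ht

theorem hasDerivAt_B_line (u d : StrongDual ℝ X) (t : ℝ) :
    HasDerivAt (fun t : ℝ => S.B (u + t • d)) (S.B d) t := by
  have := S.BL.hasFDerivAt.comp_hasDerivAt t (((hasDerivAt_id t).smul_const d).const_add u)
  rwa [one_smul] at this

variable [CompactSpace Ξ] (A : Assumption3 S)
    {Gc : StrongDual ℝ X → C(Ξ, R)} {DGc : StrongDual ℝ X → StrongDual ℝ X → C(Ξ, R)}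

theorem norm_J_sub_le {u₁ u₂ : StrongDual ℝ X} (h₁ : S.ψ u₁ ≠ ⊤) (h₂ : S.ψ u₂ ≠ ⊤) (ξ : Ξ) :
    ‖S.J (S.B u₂) ξ - S.J (S.B u₁) ξ‖ ≤ A.L ξ * ‖S.B u₂ - S.B u₁‖ := by
  have hseg : segment ℝ (S.B u₁) (S.B u₂) ⊆ A.W₀ := by
    have : S.B '' segment ℝ u₁ u₂ = segment ℝ (S.B u₁) (S.B u₂) := by
      simpa using image_segment ℝ S.B.toAffineMap u₁ u₂
    rw [← this]
    exact (Set.image_mono fun u hu => A.dom_sub (S.convex_dom.segment_subset h₁ h₂ hu)).trans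
      A.BU₀_sub
  exact (convex_segment _ _).norm_image_sub_le_of_norm_hasFDerivWithin_le
    (fun w hw => (A.DJ_deriv ξ w (hseg hw)).hasFDerivWithinAt)
    (fun w hw => A.DJ_bound w (hseg hw) ξ) (left_mem_segment _ _ _) (right_mem_segment _ _ _)

theorem integrable_J (A : Assumption3 S) {u : StrongDual ℝ X} (hu : S.ψ u ≠ ⊤) :
    Integrable (S.J (S.B u)) S.μ := by
  obtain ⟨u₀, -, hu₀⟩ := S.feas_pt
  obtain ⟨hF₀, hψ₀⟩ := ENNReal.add_ne_top.1 hu₀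
  have hJ₀ : Integrable (S.J (S.B u₀)) S.μ := by
    refine ⟨(S.measurable_J _).aestronglyMeasurable, ?_⟩
    rw [hasFiniteIntegral_iff_ofReal (Eventually.of_forall (S.J_nonneg _))]
    exact hF₀.lt_top
  refine (hJ₀.add (A.L_int.mul_const ‖S.B u - S.B u₀‖)).mono'
    (S.measurable_J _).aestronglyMeasurable (Eventually.of_forall fun ξ => ?_)
  have := S.norm_J_sub_le A hψ₀ hu ξ
  rw [Real.norm_of_nonneg (S.J_nonneg _ ξ)]
  rw [Real.norm_eq_abs, abs_le] at this
  simp only [Pi.add_apply]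
  linarith [this.2]

theorem obj_eq_ofReal (A : Assumption3 S) {u : StrongDual ℝ X} (hu : S.ψ u ≠ ⊤) :
    S.obj u = ENNReal.ofReal ((∫ ξ, S.J (S.B u) ξ ∂S.μ) + (S.ψ u).toReal) := by
  rw [ENNReal.ofReal_add (integral_nonneg (S.J_nonneg _)) ENNReal.toReal_nonneg,
    ENNReal.ofReal_toReal hu, ofReal_integral_eq_lintegral_ofReal (S.integrable_J A hu)
      (Eventually.of_forall (S.J_nonneg _))]
  rfl

theorem hasLineDerivAt_integral_J {u : StrongDual ℝ X} (hu : S.ψ u ≠ ⊤) (d : StrongDual ℝ X) :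
    HasLineDerivAt ℝ (fun u => ∫ ξ, S.J (S.B u) ξ ∂S.μ) (∫ ξ, A.DJ (S.B u) ξ (S.B d) ∂S.μ)
      u d := by
  have hline : Continuous fun t : ℝ => u + t • d := by fun_prop
  have h0 : (0 : ℝ) ∈ (fun t : ℝ => u + t • d) ⁻¹' A.U₀ := by simpa using A.dom_sub hu
  have hW₀ : ∀ t ∈ (fun t : ℝ => u + t • d) ⁻¹' A.U₀, S.B (u + t • d) ∈ A.W₀ :=
    fun t ht => A.BU₀_sub (Set.mem_image_of_mem _ ht)
  have hderiv : ∀ ξ, ∀ t ∈ (fun t : ℝ => u + t • d) ⁻¹' A.U₀,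
      HasDerivAt (fun t => S.J (S.B (u + t • d)) ξ) (A.DJ (S.B (u + t • d)) ξ (S.B d)) t :=
    fun ξ t ht => (A.DJ_deriv ξ _ (hW₀ t ht)).comp_hasDerivAt (l := fun w => S.J w ξ) t
      (S.hasDerivAt_B_line u d t)
  have := hasDerivAt_integral_of_dominated_loc_of_deriv_le
    (x₀ := 0) (F := fun t ξ => S.J (S.B (u + t • d)) ξ)
    (F' := fun t ξ => A.DJ (S.B (u + t • d)) ξ (S.B d)) (bound := fun ξ => A.L ξ * ‖S.B d‖)
    ((A.U₀_open.preimage hline).mem_nhds h0)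
    (Eventually.of_forall fun t => (S.measurable_J _).aestronglyMeasurable)
    (by simpa using S.integrable_J A hu)
    (A.DJ_meas _ (hW₀ 0 h0) _).aestronglyMeasurable
    (ae_of_all _ fun ξ t ht => (A.DJ _ ξ).le_of_opNorm_le (A.DJ_bound _ (hW₀ t ht) ξ) _)
    (A.L_int.mul_const _)
    (ae_of_all _ hderiv)
  simpa [HasLineDerivAt] using this.2


theorem continuousOn_DG_line {u v : StrongDual ℝ X} (hu : S.ψ u ≠ ⊤) (hv : S.ψ v ≠ ⊤) :
    ContinuousOn (Function.uncurry fun (t : ℝ) ξ => A.DG (S.B (u + t • (v - u))) ξ (S.B (v - u)))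
      (Set.Icc 0 1 ×ˢ Set.univ) := by
  refine (ContinuousLinearMap.apply ℝ R (S.B (v - u))).continuous.comp_continuousOn
    (A.DG_jcont.comp (f := fun p : ℝ × Ξ => (S.B (u + p.1 • (v - u)), p.2))
      ((S.continuous_B.comp (by fun_prop)).prodMk continuous_snd).continuousOn fun p hp => ?_)
  exact ⟨Set.mem_image_of_mem _ (A.dom_sub (S.add_smul_sub_mem_dom hu hv hp.1)), trivial⟩

theorem eventually_feas_add_smul_sub (hGc : ∀ u ∈ A.U₀, ∀ ξ : Ξ, Gc u ξ = S.G (S.B u) ξ)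
    (hDGc : ∀ u ∈ A.U₀, ∀ (h : StrongDual ℝ X) (ξ : Ξ), DGc u h ξ = A.DG (S.B u) ξ (S.B h))
    {u v : StrongDual ℝ X} (hu : S.ψ u ≠ ⊤) (hv : S.ψ v ≠ ⊤) (hfeas : S.Feas u) {s : ℝ}
    (hs : s ≤ 0) (hk : Gc u + DGc u (v - u) + s • Gc u ∈ interior S.coneC) :
    ∀ᶠ t in 𝓝[>] (0 : ℝ), S.Feas (u + t • (v - u)) := by
  set d := v - u
  have hderiv : ∀ ξ, ∀ t ∈ Set.Icc (0 : ℝ) 1, HasDerivWithinAt (fun t => S.G (S.B (u + t • d)) ξ)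
      (A.DG (S.B (u + t • d)) ξ (S.B d)) (Set.Icc 0 1) t := fun ξ t ht =>
    ((A.DG_deriv ξ _ (A.BU₀_sub (Set.mem_image_of_mem _
      (A.dom_sub (S.add_smul_sub_mem_dom hu hv ht))))).comp_hasDerivAt
        (l := fun w => S.G w ξ) t (S.hasDerivAt_B_line u d t)).hasDerivWithinAt
  obtain ⟨δ, hδ, hmargin⟩ := exists_pos_add_mem_of_mem_interior hk
  have htaylor := eventually_norm_sub_sub_smul_le hderiv (S.continuousOn_DG_line A hu hv)
    (half_pos hδ)
  filter_upwards [htaylor, Ioo_mem_nhdsGT one_pos] with t htaylor ht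
  refine hfeas.mono fun ξ hξ => ?_
  set e := S.G (S.B (u + t • d)) ξ - S.G (S.B u) ξ - t • A.DG (S.B u) ξ (S.B d) with he
  have hmem : S.G (S.B u) ξ + A.DG (S.B u) ξ (S.B d) + s • S.G (S.B u) ξ + t⁻¹ • e ∈ S.K := by
    have hu₀ := A.dom_sub hu
    have := hmargin ξ (t⁻¹ • e) ?_
    · simpa [hGc u hu₀, hDGc u hu₀] using this
    rw [norm_smul, Real.norm_of_nonneg (inv_nonneg.2 ht.1.le), inv_mul_lt_iff₀ ht.1]
    have : ‖e‖ ≤ δ / 2 * t := by simpa only [zero_smul, add_zero] using htaylor ξ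
    nlinarith [mul_pos ht.1 hδ]
  convert S.add_smul_sub_sub_smul_mem_K hξ hmem (Set.Ioo_subset_Icc_self ht) hs using 1
  rw [show ∀ x y z w : R, x + y + z + w - x - z = y + w by intro x y z w; abel, smul_add,
    smul_inv_smul₀ ht.1.ne', he]
  abel

theorem linearized_optimality (hGc : ∀ u ∈ A.U₀, ∀ ξ : Ξ, Gc u ξ = S.G (S.B u) ξ)
    (hDGc : ∀ u ∈ A.U₀, ∀ (h : StrongDual ℝ X) (ξ : Ξ), DGc u h ξ = A.DG (S.B u) ξ (S.B h))
    {u : StrongDual ℝ X} (hfeas : S.Feas u) (hu : S.ψ u ≠ ⊤)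
    (hloc : ∃ ε : ℝ, 0 < ε ∧ ∀ w : StrongDual ℝ X, S.Feas w → ‖w - u‖ < ε → S.obj u ≤ S.obj w)
    {v : StrongDual ℝ X} (hv : S.ψ v ≠ ⊤) {s : ℝ} (hs : s ≤ 0)
    (hk : Gc u + DGc u (v - u) + s • Gc u ∈ interior S.coneC) :
    0 ≤ (∫ ξ, A.DJ (S.B u) ξ (S.B (v - u)) ∂S.μ) + (S.ψ v).toReal - (S.ψ u).toReal := by
  obtain ⟨ε, hε, hmin⟩ := hloc
  set d := v - u
  have hline : Tendsto (fun t : ℝ => u + t • d) (𝓝[>] 0) (𝓝 u) := by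
    simpa using ((Continuous.tendsto (by fun_prop) (0 : ℝ)).mono_left nhdsWithin_le_nhds :
      Tendsto (fun t : ℝ => u + t • d) (𝓝[>] 0) (𝓝 (u + (0 : ℝ) • d)))
  rw [add_sub_assoc]
  refine ge_of_tendsto
    ((S.hasLineDerivAt_integral_J A hu d).tendsto_slope_zero_right.add_const _) ?_
  filter_upwards [S.eventually_feas_add_smul_sub A hGc hDGc hu hv hfeas hs hk,
    Ioo_mem_nhdsGT one_pos, hline.eventually_mem (Metric.ball_mem_nhds u hε)]
    with t hfeas_t ht hnear_t
  have hdom_t := S.add_smul_sub_mem_dom hu hv (Set.Ioo_subset_Icc_self ht)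
  have hobj := hmin _ hfeas_t (by rwa [Metric.mem_ball, dist_eq_norm] at hnear_t)
  rw [S.obj_eq_ofReal A hu, S.obj_eq_ofReal A hdom_t, ENNReal.ofReal_le_ofReal_iff
    (add_nonneg (integral_nonneg (S.J_nonneg _)) ENNReal.toReal_nonneg)] at hobj
  have hψ := S.convexOn_toReal_ψ.2 hu hv (sub_nonneg.2 ht.2.le) ht.1.le (sub_add_cancel 1 t)
  rw [show (1 - t) • u + t • v = u + t • d by module] at hψ
  rw [smul_eq_mul, show ∀ a b : ℝ, t⁻¹ * a + b = t⁻¹ * (a + t * b) by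
    intro a b; field_simp [ht.1.ne']]
  refine mul_nonneg (inv_nonneg.2 ht.1.le) ?_
  simp only [smul_eq_mul] at hψ
  nlinarith

theorem exists_clm_eq_integral_DJ {u : StrongDual ℝ X} (hu : u ∈ A.U₀) :
    ∃ DF : StrongDual ℝ (StrongDual ℝ X), ∀ h, DF h = ∫ ξ, A.DJ (S.B u) ξ (S.B h) ∂S.μ := by
  have hw := A.BU₀_sub (Set.mem_image_of_mem _ hu)
  obtain ⟨Ψ, hΨ⟩ := exists_clm_eq_integral_apply (fun w => (A.DJ_meas _ hw w).aestronglyMeasurable)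
    A.L_int (A.DJ_bound _ hw)
  exact ⟨Ψ.comp S.BL, fun h => hΨ (S.B h)⟩

theorem exists_clm_eq_DGc
    (hDGc : ∀ u ∈ A.U₀, ∀ (h : StrongDual ℝ X) (ξ : Ξ), DGc u h ξ = A.DG (S.B u) ξ (S.B h))
    {u : StrongDual ℝ X} (hu : u ∈ A.U₀) :
    ∃ T : StrongDual ℝ X →L[ℝ] C(Ξ, R), ∀ h, T h = DGc u h := by
  obtain ⟨T, hT⟩ := exists_clm_eq_apply_continuousMap
    ⟨fun ξ => A.DG (S.B u) ξ, A.DG_jcont.comp_continuous (continuous_const.prodMk continuous_id)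
      fun ξ => ⟨Set.mem_image_of_mem _ hu, trivial⟩⟩
  exact ⟨T.comp S.BL, fun h => ContinuousMap.ext fun ξ => (hT _ ξ).trans (hDGc u hu h ξ).symm⟩

end StandingSetup

theorem KKT_conditions_for_problem_P_general {X W R R₀ Ξ Ω : Type*}
    [NormedAddCommGroup X] [NormedSpace ℝ X]
    [NormedAddCommGroup W] [NormedSpace ℝ W]
    [NormedAddCommGroup R] [NormedSpace ℝ R]
    [NormedAddCommGroup R₀] [NormedSpace ℝ R₀]
    [MeasurableSpace R] [BorelSpace R] [MeasurableSpace R₀] [BorelSpace R₀]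
    [MetricSpace Ξ] [CompactSpace Ξ]
    [MeasurableSpace Ξ] [BorelSpace Ξ] [MeasurableSpace Ω]
    (S : StandingSetup X W R R₀ Ξ Ω) (A : Assumption3 S)
    (Gc : StrongDual ℝ X → ContinuousMap Ξ R)
    (hGc : ∀ u ∈ A.U₀, ∀ ξ : Ξ, Gc u ξ = S.G (S.B u) ξ)
    (DGc : StrongDual ℝ X → StrongDual ℝ X → ContinuousMap Ξ R)
    (hDGc : ∀ u ∈ A.U₀, ∀ (h : StrongDual ℝ X) (ξ : Ξ),
      DGc u h ξ = A.DG (S.B u) ξ (S.B h))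
    (ustar : StrongDual ℝ X)
    (hfeas : S.Feas ustar) (hdom : S.ψ ustar ≠ ⊤)
    (hloc : ∃ ε : ℝ, 0 < ε ∧ ∀ u : StrongDual ℝ X, S.Feas u → ‖u - ustar‖ < ε →
      S.obj ustar ≤ S.obj u)
    (hCQ : S.CQ Gc DGc ustar) :
    ∃ lam : StrongDual ℝ (ContinuousMap Ξ R), S.KKTP A Gc DGc ustar lam := by
  have hU₀ := A.dom_sub hdom
  obtain ⟨DF, hDF⟩ := S.exists_clm_eq_integral_DJ A hU₀
  obtain ⟨T, hT⟩ := S.exists_clm_eq_DGc A hDGc hU₀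
  obtain ⟨v₀, hv₀, hslater⟩ := hCQ
  have hφ : ConvexOn ℝ {u | S.ψ u ≠ ⊤}
      fun v => DF (v - ustar) + (S.ψ v).toReal - (S.ψ ustar).toReal := by
    refine (((DF.toLinearMap.convexOn S.convex_dom).add S.convexOn_toReal_ψ).add_const
      (-(DF ustar + (S.ψ ustar).toReal))).congr fun v _ => ?_
    simp only [Pi.add_apply, ContinuousLinearMap.coe_coe, map_sub]
    ring
  obtain ⟨Λ, hΛK, hΛg, hΛ⟩ := exists_lagrange_multiplier_of_linearized_optimality
    (T := T.toLinearMap) hφ S.convex_coneC S.smul_mem_coneC hdom (by simp) hv₀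
    (by simpa [hT] using hslater) fun v hv s hs hk => by
      simpa only [hDF] using S.linearized_optimality A hGc hDGc hfeas hdom hloc hv hs
        (by simpa [hT] using hk)
  refine ⟨Λ, ⟨-(DF + Λ.comp T), ⟨hdom, fun v hv => ?_⟩, fun h => ?_⟩, hΛK, hΛg⟩
  · have := hΛ v hv
    simp only [ContinuousLinearMap.coe_coe, neg_apply, add_apply,
      ContinuousLinearMap.comp_apply] at this ⊢
    linarith
  · simp [hDF, hT]

/-- KKT conditions for problem (P): if `𝒦` has nonempty interior and the
constraint qualification holds at a local optimum `u*` of (P), then there is a Lagrange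
multiplier `λ* ∈ C(Ξ;R)*` with `0 ∈ DF(u*) + ∂ψ(u*) + D𝒢(u*)*λ*`, `λ* ∈ 𝒦⁻`, and
`⟨λ*, 𝒢(u*)⟩ = 0`. -/
theorem KKT_conditions_for_problem_P {X W R R₀ Ξ Ω : Type*}
    [NormedAddCommGroup X] [NormedSpace ℝ X] [SeparableSpace X] [CompleteSpace X]
    [NormedAddCommGroup W] [NormedSpace ℝ W] [SeparableSpace W] [CompleteSpace W]
    [NormedAddCommGroup R] [NormedSpace ℝ R] [SeparableSpace R] [CompleteSpace R]
    [NormedAddCommGroup R₀] [NormedSpace ℝ R₀] [SeparableSpace R₀] [CompleteSpace R₀]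
    [MeasurableSpace R] [BorelSpace R] [MeasurableSpace R₀] [BorelSpace R₀]
    [MetricSpace Ξ] [CompactSpace Ξ] [SeparableSpace Ξ]
    [MeasurableSpace Ξ] [BorelSpace Ξ] [MeasurableSpace Ω]
    (S : StandingSetup X W R R₀ Ξ Ω) (A : Assumption3 S)
    (Gc : StrongDual ℝ X → ContinuousMap Ξ R)
    (hGc : ∀ u ∈ A.U₀, ∀ ξ : Ξ, Gc u ξ = S.G (S.B u) ξ)
    (DGc : StrongDual ℝ X → StrongDual ℝ X → ContinuousMap Ξ R)
    (hDGc : ∀ u ∈ A.U₀, ∀ (h : StrongDual ℝ X) (ξ : Ξ),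
      DGc u h ξ = A.DG (S.B u) ξ (S.B h))
    (hint : (interior S.coneC).Nonempty)
    (ustar : StrongDual ℝ X)
    (hfeas : S.Feas ustar) (hdom : S.ψ ustar ≠ ⊤)
    (hloc : ∃ ε : ℝ, 0 < ε ∧ ∀ u : StrongDual ℝ X, S.Feas u → ‖u - ustar‖ < ε →
      S.obj ustar ≤ S.obj u)
    (hCQ : S.CQ Gc DGc ustar) :
    ∃ lam : StrongDual ℝ (ContinuousMap Ξ R), S.KKTP A Gc DGc ustar lam :=
  KKT_conditions_for_problem_P_general S A Gc hGc DGc hDGc ustar hfeas hdom hloc hCQ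
end
end

section
/- Under the standing setup (Assumption 1), Assumption 3, and with β : R → [0,∞) convex, continuously differentiable, and β(r) = 0 iff r ∈ K (Assumption 2'), suppose 𝒦 has nonempty interior. Let (γ_N) ⊂ (0,∞) with γ_N → ∞, and let (u_N^{γ_N}, λ_N^{γ_N}) satisfy the regularized SAA stationarity condition 0 ∈ DF̂_N(u_N^{γ_N}) + ∂ψ(u_N^{γ_N}) + D𝒢(u_N^{γ_N})*λ_N^{γ_N}, where λ_N^{γ_N} ∈ C(Ξ;R)* is defined by ⟨λ_N^{γ_N}, v⟩ := (1/N)Σ_{i=1}^N ⟨γ_N Dβ(G(u_N^{γ_N},ξ^i)), v(ξ^i)⟩. If with probability one u_N^{γ_N} ⇀* ū, where ū satisfies the constraint qualification (CQ), then with probability one the sequence (λ_N^{γ_N}) is bounded in C(Ξ;R)*. -/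
open MeasureTheory Filter Topology TopologicalSpace
open scoped ENNReal

noncomputable section

/-!
The penalty multipliers lie in the polar of `𝒦`: convexity of `β` and `β = 0` on the cone `K`
give `Dβ(r) k ≤ 0` for `k ∈ K`, while `Dβ(r) r ≥ β(r) - β(0) ≥ 0` makes `λ_N(𝒢(u_N)) ≥ 0`.
Testing stationarity with `û - u_N`, the subgradient inequality and `‖D_w𝒥‖ ≤ L` bound
`λ_N(D𝒢(u_N)(û - u_N))` from below by `-(sample mean of L) ‖B(û - u_N)‖ - ψ(û)`, and the strong
law of large numbers keeps the sample mean of `L` bounded almost surely. On such a sample path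
`𝒢(u_N) + D𝒢(u_N)(û - u_N)` converges in `C(Ξ;R)` to the CQ point, an interior point of `𝒦`;
a functional that is nonpositive on a ball of radius `r` around `z` and `≥ -M` at `z` has norm
at most `M / r`.
-/

open Set ProbabilityTheory Metric

section ConvexPenalty

variable {E : Type*} [NormedAddCommGroup E] [NormedSpace ℝ E] {β : E → ℝ} {Dβ : E → E →L[ℝ] ℝ}

theorem ConvexOn.fderiv_apply_sub_le (hconv : ConvexOn ℝ univ β)
    (hderiv : ∀ r, HasFDerivAt β (Dβ r) r) (x y : E) : Dβ x (y - x) ≤ β y - β x := by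
  have hline : ConvexOn ℝ univ (β ∘ AffineMap.lineMap (k := ℝ) x y) := by
    simpa using hconv.comp_affineMap (AffineMap.lineMap (k := ℝ) x y)
  have hderiv_line : HasDerivAt (β ∘ AffineMap.lineMap (k := ℝ) x y) (Dβ x (y - x)) 0 :=
    (hderiv x).comp_hasDerivAt_of_eq 0 AffineMap.hasDerivAt_lineMap
      (AffineMap.lineMap_apply_zero x y).symm
  simpa [slope_def_field] using hline.le_slope_of_hasDerivWithinAt_Ioi (mem_univ 0)
    (mem_univ 1) one_pos hderiv_line.hasDerivWithinAt

theorem ConvexOn.fderiv_apply_nonpos_of_forall_smul_eq_zero (hconv : ConvexOn ℝ univ β)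
    (hderiv : ∀ r, HasFDerivAt β (Dβ r) r) (r : E) {k : E}
    (hk : ∀ t : ℝ, 0 < t → β (t • k) = 0) : Dβ r k ≤ 0 := by
  have hbound : ∀ t : ℝ, 0 < t → Dβ r k ≤ (Dβ r r - β r) / t := fun t ht => by
    have h := hconv.fderiv_apply_sub_le hderiv r (t • k)
    rw [hk t ht, map_sub, map_smul, smul_eq_mul] at h
    rw [le_div_iff₀ ht]
    linarith
  refine ge_of_tendsto ((tendsto_const_nhds (x := Dβ r r - β r)).div_atTop tendsto_id) ?_
  filter_upwards [eventually_gt_atTop 0] with t ht using hbound t ht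

theorem ConvexOn.fderiv_apply_self_nonneg (hconv : ConvexOn ℝ univ β)
    (hderiv : ∀ r, HasFDerivAt β (Dβ r) r) {r : E} (hr : β 0 ≤ β r) : 0 ≤ Dβ r r := by
  have h := hconv.fderiv_apply_sub_le hderiv r 0
  rw [zero_sub, map_neg] at h
  linarith

end ConvexPenalty

section PolarBound

variable {E : Type*} [NormedAddCommGroup E] [NormedSpace ℝ E]

theorem StrongDual.norm_le_of_nonpos_on_closedBall {f : StrongDual ℝ E} {z : E} {r M : ℝ}
    (hr : 0 < r) (hf : ∀ v ∈ closedBall z r, f v ≤ 0) (hz : -M ≤ f z) : ‖f‖ ≤ M / r := by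
  refine ContinuousLinearMap.opNorm_bound_of_ball_bound hr M f fun v hv => ?_
  rw [mem_closedBall_zero_iff] at hv
  have hadd := hf (z + v) (by simpa [mem_closedBall, dist_eq_norm] using hv)
  have hsub := hf (z - v) (by simpa [mem_closedBall, dist_eq_norm] using hv)
  rw [map_add] at hadd
  rw [map_sub] at hsub
  rw [Real.norm_eq_abs, abs_le]
  constructor <;> linarith

theorem StrongDual.exists_norm_le_of_nonpos_on_of_tendsto_mem_interior {C : Set E}
    {f : ℕ → StrongDual ℝ E} {z : ℕ → E} {z₀ : E} {M : ℝ} (hf : ∀ N, ∀ v ∈ C, f N v ≤ 0)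
    (hz : Tendsto z atTop (𝓝 z₀)) (hz₀ : z₀ ∈ interior C) (hM : ∀ᶠ N in atTop, -M ≤ f N (z N)) :
    ∃ B, ∀ N, ‖f N‖ ≤ B := by
  obtain ⟨r, hr, hball⟩ := nhds_basis_closedBall.mem_iff.1 (mem_interior_iff_mem_nhds.1 hz₀)
  have hnorm : ∀ᶠ N in atTop, ‖f N‖ ≤ M / (r / 2) := by
    filter_upwards [hM, hz.eventually (closedBall_mem_nhds z₀ (half_pos hr))] with N hN hzN
    refine norm_le_of_nonpos_on_closedBall (half_pos hr) (fun v hv => hf N v (hball ?_)) hN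
    exact closedBall_subset_closedBall' (by linarith [mem_closedBall'.1 hzN]) hv
  obtain ⟨B, hB⟩ := (isBoundedUnder_of_eventually_le hnorm).bddAbove_range
  exact ⟨B, fun N => hB ⟨N, rfl⟩⟩

end PolarBound

theorem tendsto_continuousMap_of_continuousOn_prod {α Y Z : Type*} [TopologicalSpace α]
    [TopologicalSpace Y] [TopologicalSpace Z] {g : α → Y → Z} {s : Set α}
    (hg : ContinuousOn (fun p : α × Y => g p.1 p.2) (s ×ˢ univ)) {F : ℕ → C(Y, Z)} {F₀ : C(Y, Z)}
    {w : ℕ → α} {w₀ : α} (hF : ∀ N y, F N y = g (w N) y) (hF₀ : ∀ y, F₀ y = g w₀ y)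
    (hws : ∀ N, w N ∈ s) (hw₀ : w₀ ∈ s) (hw : Tendsto w atTop (𝓝 w₀)) :
    Tendsto F atTop (𝓝 F₀) := by
  let gs : C(s, C(Y, Z)) := ContinuousMap.curry
    ⟨fun p : s × Y => g p.1 p.2, hg.comp_continuous (continuous_subtype_val.prodMap continuous_id)
      fun p => ⟨p.1.2, mem_univ _⟩⟩
  have hF_eq : F = fun N => gs ⟨w N, hws N⟩ := funext fun N => ContinuousMap.ext (hF N)
  rw [hF_eq, show F₀ = gs ⟨w₀, hw₀⟩ from ContinuousMap.ext hF₀]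
  exact (gs.continuous.tendsto _).comp (tendsto_subtype_rng.2 hw)

theorem ae_tendsto_sampleMean {Ω Ξ : Type*} [MeasurableSpace Ω] [MeasurableSpace Ξ]
    {P : Measure Ω} {μ : Measure Ξ} {ξ : ℕ → Ω → Ξ} (hmeas : ∀ i, Measurable (ξ i))
    (hlaw : ∀ i, P.map (ξ i) = μ) (hindep : Pairwise fun i j => IndepFun (ξ i) (ξ j) P)
    {f : Ξ → ℝ} (hf : Integrable f μ) :
    ∀ᵐ ω ∂P, Tendsto (fun n : ℕ => (n : ℝ)⁻¹ * ∑ i ∈ Finset.range n, f (ξ i ω)) atTop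
      (𝓝 (∫ x, f x ∂μ)) := by
  set f' := hf.1.mk f
  have hf'm : Measurable f' := hf.1.stronglyMeasurable_mk.measurable
  have hff' : ∀ᵐ ω ∂P, ∀ i, f (ξ i ω) = f' (ξ i ω) := ae_all_iff.2 fun i =>
    ae_of_ae_map (hmeas i).aemeasurable (by rw [hlaw i]; exact hf.1.ae_eq_mk)
  have hident : ∀ i, IdentDistrib (f' ∘ ξ i) (f' ∘ ξ 0) P P := fun i =>
    ⟨(hf'm.comp (hmeas i)).aemeasurable, (hf'm.comp (hmeas 0)).aemeasurable, by
      rw [← Measure.map_map hf'm (hmeas i), ← Measure.map_map hf'm (hmeas 0), hlaw i, hlaw 0]⟩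
  have hint : Integrable (f' ∘ ξ 0) P := by
    rw [← integrable_map_measure hf'm.aestronglyMeasurable (hmeas 0).aemeasurable, hlaw 0]
    exact hf.congr hf.1.ae_eq_mk
  have hmean : ∫ ω, (f' ∘ ξ 0) ω ∂P = ∫ x, f x ∂μ := by
    rw [Function.comp_def, ← integral_map (hmeas 0).aemeasurable hf'm.aestronglyMeasurable, hlaw 0]
    exact integral_congr_ae hf.1.ae_eq_mk.symm
  filter_upwards [strong_law_ae_real _ hint (fun i j hij => (hindep hij).comp hf'm hf'm) hident,
    hff'] with ω hω hωf
  rw [← hmean]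
  refine hω.congr fun n => ?_
  simp only [Function.comp, hωf, inv_mul_eq_div]

namespace StandingSetup

variable {X W R R₀ Ξ Ω : Type*}
    [NormedAddCommGroup X] [NormedSpace ℝ X]
    [NormedAddCommGroup W] [NormedSpace ℝ W]
    [NormedAddCommGroup R] [NormedSpace ℝ R]
    [NormedAddCommGroup R₀] [NormedSpace ℝ R₀]
    [MeasurableSpace R] [BorelSpace R] [MeasurableSpace R₀] [BorelSpace R₀]
    [MetricSpace Ξ] [MeasurableSpace Ξ] [BorelSpace Ξ]
    [MeasurableSpace Ω]
    (S : StandingSetup X W R R₀ Ξ Ω)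

theorem zero_mem_K : (0 : R) ∈ S.K := by
  simpa using S.K_cone 0 _ le_rfl S.K_ne.some_mem

theorem subdiff_apply_sub_le {u v : StrongDual ℝ X} {η : StrongDual ℝ (StrongDual ℝ X)}
    (hη : η ∈ S.subdiff u) (hv : S.ψ v ≠ ⊤) : η (v - u) ≤ (S.ψ v).toReal := by
  linarith [hη.2 v hv, (S.ψ u).toReal_nonneg]

variable {β : R → ℝ} {Dβ : R → R →L[ℝ] ℝ}

theorem fderiv_apply_nonpos_of_mem_K (hβ_convex : ConvexOn ℝ univ β)
    (hβ_deriv : ∀ r, HasFDerivAt β (Dβ r) r) (hβ_zero : ∀ r, β r = 0 ↔ r ∈ S.K) (r : R)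
    {k : R} (hk : k ∈ S.K) : Dβ r k ≤ 0 :=
  hβ_convex.fderiv_apply_nonpos_of_forall_smul_eq_zero hβ_deriv r fun t ht =>
    (hβ_zero _).2 (S.K_cone t k ht.le hk)

theorem sampleMultiplier_nonpos_on_coneC (hβ_convex : ConvexOn ℝ univ β)
    (hβ_deriv : ∀ r, HasFDerivAt β (Dβ r) r) (hβ_zero : ∀ r, β r = 0 ↔ r ∈ S.K)
    {ℓ : StrongDual ℝ C(Ξ, R)} {n : ℕ} {c : ℝ} (hc : 0 ≤ c) (ξ : ℕ → Ξ) (r : ℕ → R)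
    (hℓ : ∀ v, ℓ v = (n : ℝ)⁻¹ * ∑ i ∈ Finset.range n, c * Dβ (r i) (v (ξ i))) :
    ∀ v ∈ S.coneC, ℓ v ≤ 0 := fun v hv => by
  rw [hℓ]
  refine mul_nonpos_of_nonneg_of_nonpos (by positivity) (Finset.sum_nonpos fun i _ => ?_)
  exact mul_nonpos_of_nonneg_of_nonpos hc
    (S.fderiv_apply_nonpos_of_mem_K hβ_convex hβ_deriv hβ_zero _ (hv _))

theorem sampleMultiplier_apply_nonneg (hβ_nonneg : ∀ r, 0 ≤ β r)
    (hβ_convex : ConvexOn ℝ univ β) (hβ_deriv : ∀ r, HasFDerivAt β (Dβ r) r)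
    (hβ_zero : ∀ r, β r = 0 ↔ r ∈ S.K)
    {ℓ : StrongDual ℝ C(Ξ, R)} {n : ℕ} {c : ℝ} (hc : 0 ≤ c) (ξ : ℕ → Ξ) (r : ℕ → R)
    (hℓ : ∀ v, ℓ v = (n : ℝ)⁻¹ * ∑ i ∈ Finset.range n, c * Dβ (r i) (v (ξ i)))
    {g : C(Ξ, R)} (hg : ∀ i, g (ξ i) = r i) : 0 ≤ ℓ g := by
  rw [hℓ]
  refine mul_nonneg (by positivity) (Finset.sum_nonneg fun i _ => mul_nonneg hc ?_)
  rw [hg]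
  exact hβ_convex.fderiv_apply_self_nonneg hβ_deriv
    (((hβ_zero 0).2 S.zero_mem_K).trans_le (hβ_nonneg _))

end StandingSetup

namespace Assumption3

variable {X W R R₀ Ξ Ω : Type*}
    [NormedAddCommGroup X] [NormedSpace ℝ X]
    [NormedAddCommGroup W] [NormedSpace ℝ W]
    [NormedAddCommGroup R] [NormedSpace ℝ R]
    [NormedAddCommGroup R₀] [NormedSpace ℝ R₀]
    [MeasurableSpace R] [BorelSpace R] [MeasurableSpace R₀] [BorelSpace R₀]
    [MetricSpace Ξ] [CompactSpace Ξ] [MeasurableSpace Ξ] [BorelSpace Ξ]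
    [MeasurableSpace Ω]
    {S : StandingSetup X W R R₀ Ξ Ω} (A : Assumption3 S)

theorem abs_sampleMean_DJ_le {w : W} (hw : w ∈ A.W₀) (n : ℕ) (ξ : ℕ → Ξ) (h : W) :
    |(n : ℝ)⁻¹ * ∑ i ∈ Finset.range n, A.DJ w (ξ i) h| ≤
      (n : ℝ)⁻¹ * (∑ i ∈ Finset.range n, A.L (ξ i)) * ‖h‖ := by
  rw [abs_mul, abs_of_nonneg (by positivity), mul_assoc, Finset.sum_mul]
  refine mul_le_mul_of_nonneg_left ((Finset.abs_sum_le_sum_abs _ _).trans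
    (Finset.sum_le_sum fun i _ => ?_)) (by positivity)
  exact ((A.DJ w (ξ i)).le_opNorm h).trans
    (mul_le_mul_of_nonneg_right (A.DJ_bound w hw _) (norm_nonneg h))

theorem tendsto_linearization {Gc : StrongDual ℝ X → C(Ξ, R)}
    (hGc : ∀ u ∈ A.U₀, ∀ ξ : Ξ, Gc u ξ = S.G (S.B u) ξ)
    {DGc : StrongDual ℝ X → StrongDual ℝ X → C(Ξ, R)}
    (hDGc : ∀ u ∈ A.U₀, ∀ (h : StrongDual ℝ X) (ξ : Ξ), DGc u h ξ = A.DG (S.B u) ξ (S.B h))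
    {u : ℕ → StrongDual ℝ X} {ū : StrongDual ℝ X} (hu : ∀ N, u N ∈ A.U₀) (hū : ū ∈ A.U₀)
    (hB : Tendsto (fun N => S.B (u N)) atTop (𝓝 (S.B ū))) (û : StrongDual ℝ X) :
    Tendsto (fun N => Gc (u N) + DGc (u N) (û - u N)) atTop (𝓝 (Gc ū + DGc ū (û - ū))) := by
  have hDG : ContinuousOn (fun p : (W × W) × Ξ => A.DG p.1.1 p.2 p.1.2)
      (((S.B '' A.U₀) ×ˢ univ) ×ˢ univ) :=
    (A.DG_jcont.comp (continuous_fst.fst.prodMk continuous_snd).continuousOn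
      fun p hp => ⟨hp.1.1, mem_univ _⟩).clm_apply continuous_fst.snd.continuousOn
  have hBû : Tendsto (fun N => S.B (û - u N)) atTop (𝓝 (S.B (û - ū))) := by
    simpa only [map_sub] using tendsto_const_nhds.sub hB
  refine Tendsto.add ?_ ?_
  · exact tendsto_continuousMap_of_continuousOn_prod A.G_jcont (hGc _ <| hu ·) (hGc ū hū)
      (fun N => ⟨_, hu N, rfl⟩) ⟨_, hū, rfl⟩ hB
  · exact tendsto_continuousMap_of_continuousOn_prod (g := fun p ξ => A.DG p.1 ξ p.2)
      (s := (S.B '' A.U₀) ×ˢ univ) hDG (fun N => hDGc _ (hu N) _) (hDGc ū hū _)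
      (fun N => mk_mem_prod ⟨_, hu N, rfl⟩ (mem_univ _)) (mk_mem_prod ⟨_, hū, rfl⟩ (mem_univ _))
      (hB.prodMk_nhds hBû)

end Assumption3

theorem regularized_SAA_multipliers_bounded_almost_surely_general {X W R R₀ Ξ Ω : Type*}
    [NormedAddCommGroup X] [NormedSpace ℝ X]
    [NormedAddCommGroup W] [NormedSpace ℝ W]
    [NormedAddCommGroup R] [NormedSpace ℝ R]
    [NormedAddCommGroup R₀] [NormedSpace ℝ R₀]
    [MeasurableSpace R] [BorelSpace R] [MeasurableSpace R₀] [BorelSpace R₀]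
    [MetricSpace Ξ] [CompactSpace Ξ]
    [MeasurableSpace Ξ] [BorelSpace Ξ] [MeasurableSpace Ω]
    (S : StandingSetup X W R R₀ Ξ Ω) (A : Assumption3 S)
    (Gc : StrongDual ℝ X → ContinuousMap Ξ R)
    (hGc : ∀ u ∈ A.U₀, ∀ ξ : Ξ, Gc u ξ = S.G (S.B u) ξ)
    (DGc : StrongDual ℝ X → StrongDual ℝ X → ContinuousMap Ξ R)
    (hDGc : ∀ u ∈ A.U₀, ∀ (h : StrongDual ℝ X) (ξ : Ξ),
      DGc u h ξ = A.DG (S.B u) ξ (S.B h))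
    (β : R → ℝ) (hβ_nonneg : ∀ r, 0 ≤ β r) (hβ_convex : ConvexOn ℝ Set.univ β)
    (Dβ : R → (R →L[ℝ] ℝ)) (hβ_deriv : ∀ r, HasFDerivAt β (Dβ r) r)
    (hβ_zero : ∀ r, β r = 0 ↔ r ∈ S.K)
    (γ : ℕ → ℝ) (hγ_pos : ∀ N, 0 < γ N)
    (useq : ℕ → Ω → StrongDual ℝ X) (lam : ℕ → Ω → StrongDual ℝ (ContinuousMap Ξ R))
    (hlam : ∀ (N : ℕ) (ω : Ω) (v : ContinuousMap Ξ R), lam N ω v =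
      ((N + 1 : ℕ) : ℝ)⁻¹ * ∑ i ∈ Finset.range (N + 1),
        γ (N + 1) * Dβ (S.G (S.B (useq N ω)) (S.samp i ω)) (v (S.samp i ω)))
    (hstat : ∀ (ω : Ω) (N : ℕ), ∃ η ∈ S.subdiff (useq N ω), ∀ h : StrongDual ℝ X,
      (((N + 1 : ℕ) : ℝ)⁻¹ * ∑ i ∈ Finset.range (N + 1),
          A.DJ (S.B (useq N ω)) (S.samp i ω) (S.B h))
        + η h + lam N ω (DGc (useq N ω) h) = 0)
    (ubar : StrongDual ℝ X) (hCQ : S.CQ Gc DGc ubar)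
    (hconv : ∀ᵐ ω ∂S.P, WSTendsto (fun N => useq N ω) ubar)
 :
    ∀ᵐ ω ∂S.P, ∃ C : ℝ, ∀ N, ‖lam N ω‖ ≤ C := by
  obtain ⟨uhat, huhat, hz⟩ := hCQ
  filter_upwards [hconv, ae_tendsto_sampleMean S.samp_meas S.samp_law
    (fun i j hij => S.samp_indep.indepFun hij) A.L_int] with ω hω hL
  have hdom : ∀ N, S.ψ (useq N ω) ≠ ⊤ := fun N => (hstat ω N).choose_spec.1.1
  have hU₀ : ∀ N, useq N ω ∈ A.U₀ := fun N => A.dom_sub (hdom N)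
  have hB := S.B_wsc _ _ hω
  have hBû : Tendsto (fun N => S.B (uhat - useq N ω)) atTop (𝓝 (S.B (uhat - ubar))) := by
    simpa only [map_sub] using tendsto_const_nhds.sub hB
  obtain ⟨M, hM⟩ : ∃ M, ∀ᶠ N in atTop, ((N + 1 : ℕ) : ℝ)⁻¹ * (∑ i ∈ Finset.range (N + 1),
      A.L (S.samp i ω)) * ‖S.B (uhat - useq N ω)‖ + (S.ψ uhat).toReal ≤ M :=
    ⟨_, (((hL.comp (tendsto_add_atTop_nat 1)).mul hBû.norm).add_const _).eventually_le_const
      (lt_add_one _)⟩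
  refine StrongDual.exists_norm_le_of_nonpos_on_of_tendsto_mem_interior (M := M)
    (fun N => S.sampleMultiplier_nonpos_on_coneC hβ_convex hβ_deriv hβ_zero (hγ_pos _).le _ _
      (hlam N ω))
    (A.tendsto_linearization hGc hDGc hU₀ (A.dom_sub (S.ψ_dom_closed _ _ hdom hω)) hB uhat) hz ?_
  filter_upwards [hM] with N hN
  obtain ⟨η, hη, hstatN⟩ := hstat ω N
  have hcompl := S.sampleMultiplier_apply_nonneg hβ_nonneg hβ_convex hβ_deriv hβ_zero
    (hγ_pos _).le _ _ (hlam N ω) (g := Gc (useq N ω)) fun i => hGc _ (hU₀ N) _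
  have hDJ := A.abs_sampleMean_DJ_le (A.BU₀_sub ⟨_, hU₀ N, rfl⟩) (N + 1) (S.samp · ω)
    (S.B (uhat - useq N ω))
  rw [map_add]
  linarith [S.subdiff_apply_sub_le hη huhat, hstatN (uhat - useq N ω), le_of_abs_le hDJ]

/-- Boundedness of the Moreau–Yosida SAA multipliers: for a convex,
continuously differentiable penalty `β` vanishing exactly on `K`, penalty parameters
`γ_N → ∞`, and regularized SAA stationary points `(u_N^{γ_N}, λ_N^{γ_N})` whose controls
converge weakly* a.s. to a point satisfying the constraint qualification, the multipliers
`(λ_N^{γ_N})` are bounded in `C(Ξ;R)*` with probability one. -/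
theorem regularized_SAA_multipliers_bounded_almost_surely {X W R R₀ Ξ Ω : Type*}
    [NormedAddCommGroup X] [NormedSpace ℝ X] [SeparableSpace X] [CompleteSpace X]
    [NormedAddCommGroup W] [NormedSpace ℝ W] [SeparableSpace W] [CompleteSpace W]
    [NormedAddCommGroup R] [NormedSpace ℝ R] [SeparableSpace R] [CompleteSpace R]
    [NormedAddCommGroup R₀] [NormedSpace ℝ R₀] [SeparableSpace R₀] [CompleteSpace R₀]
    [MeasurableSpace R] [BorelSpace R] [MeasurableSpace R₀] [BorelSpace R₀]
    [MetricSpace Ξ] [CompactSpace Ξ] [SeparableSpace Ξ]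
    [MeasurableSpace Ξ] [BorelSpace Ξ] [MeasurableSpace Ω]
    (S : StandingSetup X W R R₀ Ξ Ω) (A : Assumption3 S)
    (Gc : StrongDual ℝ X → ContinuousMap Ξ R)
    (hGc : ∀ u ∈ A.U₀, ∀ ξ : Ξ, Gc u ξ = S.G (S.B u) ξ)
    (DGc : StrongDual ℝ X → StrongDual ℝ X → ContinuousMap Ξ R)
    (hDGc : ∀ u ∈ A.U₀, ∀ (h : StrongDual ℝ X) (ξ : Ξ),
      DGc u h ξ = A.DG (S.B u) ξ (S.B h))
    (β : R → ℝ) (hβ_nonneg : ∀ r, 0 ≤ β r) (hβ_convex : ConvexOn ℝ Set.univ β)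
    (Dβ : R → (R →L[ℝ] ℝ)) (hβ_deriv : ∀ r, HasFDerivAt β (Dβ r) r)
    (hDβ_cont : Continuous Dβ) (hβ_zero : ∀ r, β r = 0 ↔ r ∈ S.K)
    (γ : ℕ → ℝ) (hγ_pos : ∀ N, 0 < γ N) (hγ : Tendsto γ atTop atTop)
    (useq : ℕ → Ω → StrongDual ℝ X) (lam : ℕ → Ω → StrongDual ℝ (ContinuousMap Ξ R))
    (hlam : ∀ (N : ℕ) (ω : Ω) (v : ContinuousMap Ξ R), lam N ω v =
      ((N + 1 : ℕ) : ℝ)⁻¹ * ∑ i ∈ Finset.range (N + 1),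
        γ (N + 1) * Dβ (S.G (S.B (useq N ω)) (S.samp i ω)) (v (S.samp i ω)))
    (hstat : ∀ (ω : Ω) (N : ℕ), ∃ η ∈ S.subdiff (useq N ω), ∀ h : StrongDual ℝ X,
      (((N + 1 : ℕ) : ℝ)⁻¹ * ∑ i ∈ Finset.range (N + 1),
          A.DJ (S.B (useq N ω)) (S.samp i ω) (S.B h))
        + η h + lam N ω (DGc (useq N ω) h) = 0)
    (hint : (interior S.coneC).Nonempty)
    (ubar : StrongDual ℝ X) (hCQ : S.CQ Gc DGc ubar)
    (hconv : ∀ᵐ ω ∂S.P, WSTendsto (fun N => useq N ω) ubar)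
 :
    ∀ᵐ ω ∂S.P, ∃ C : ℝ, ∀ N, ‖lam N ω‖ ≤ C :=
  regularized_SAA_multipliers_bounded_almost_surely_general S A Gc hGc DGc hDGc β hβ_nonneg
    hβ_convex Dβ hβ_deriv hβ_zero γ hγ_pos useq lam hlam hstat ubar hCQ hconv
end
end

section
/- Under the standing setup (Assumption 1), Assumption 3, and Assumption 2', suppose there is a constant L_𝒢 > 0 such that for all ξ ∈ Ξ the map 𝒢(·,ξ) : B(dom ψ) → R is Lipschitz continuous with constant L_𝒢. Let ε > 0, ρ > 0, δ ∈ (0,1), and suppose N ≥ (1/ε)[ln(1/δ) + ln 𝒩(ρ/(2L_𝒢), B(dom ψ))], where 𝒩(ν, B(dom ψ)) is the ν-covering number of the compact set B(dom ψ) ⊂ W. Then with probability at least 1 − δ, the feasible set of the SAA problem (P_SAA) is contained in 𝒰_ε(ρ) := {u ∈ dom ψ : ℙ(𝒢(Bu,ξ) ∈ K + B̄_R(0;ρ)) ≥ 1 − ε}. -/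
open MeasureTheory Filter Topology TopologicalSpace
open scoped ENNReal

noncomputable section

open scoped Pointwise

/-- the `ν`-covering number of a set `A ⊂ W`: the minimal number of points whose
`ν`-balls cover `A` -/
def coveringNumber {W : Type*} [SeminormedAddCommGroup W] (ν : ℝ) (A : Set W) : ℕ :=
  sInf {n : ℕ | ∃ t : Finset W, t.card = n ∧ A ⊆ ⋃ x ∈ t, Metric.ball x ν}


section AuxLemmas

open TopologicalSpace

/-- Every subset of a separable metric space contains a countable subset dense in it. -/
lemma exists_countable_dense_subset_set {α : Type*} [MetricSpace α] [SeparableSpace α]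
    (s : Set α) : ∃ c : Set α, c ⊆ s ∧ c.Countable ∧ s ⊆ closure c := by
  have hsep : IsSeparable s := IsSeparable.of_separableSpace s
  haveI := hsep.separableSpace
  obtain ⟨c, hcc, hcd⟩ := TopologicalSpace.exists_countable_dense s
  refine ⟨Subtype.val '' c, by rintro _ ⟨w, -, rfl⟩; exact w.2, hcc.image _, ?_⟩
  have h1 : Subtype.val '' (closure c) ⊆ closure (Subtype.val '' c) :=
    image_closure_subset_closure_image continuous_subtype_val
  intro w hw
  exact h1 ⟨⟨w, hw⟩, hcd _, rfl⟩

/-- Sequential Banach–Alaoglu: any norm-bounded sequence in the dual of a separable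
Banach space contains a weak-star convergent subsequence. -/
lemma exists_weakstar_subseq {X : Type*} [NormedAddCommGroup X] [NormedSpace ℝ X]
    [SeparableSpace X] [CompleteSpace X] (C : ℝ) (u : ℕ → StrongDual ℝ X)
    (hu : ∀ n, ‖u n‖ ≤ C) :
    ∃ (u₀ : StrongDual ℝ X) (φ : ℕ → ℕ), StrictMono φ ∧
      WSTendsto (fun n => u (φ n)) u₀ := by
  haveI : Nonempty X := ⟨0⟩
  set x : ℕ → X := denseSeq X with hxdef
  have hx : DenseRange x := denseRange_denseSeq X
  set C' : ℝ := max C 0 with hC'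
  have hC0 : 0 ≤ C' := le_max_right _ _
  have hub : ∀ n y, |u n y| ≤ C' * ‖y‖ := by
    intro n y
    calc |u n y| = ‖u n y‖ := rfl
      _ ≤ ‖u n‖ * ‖y‖ := (u n).le_opNorm y
      _ ≤ C' * ‖y‖ :=
        mul_le_mul_of_nonneg_right (le_max_of_le_left (hu n)) (norm_nonneg y)
  set T : Set (ℕ → ℝ) := Set.univ.pi fun m => Set.Icc (-(C' * ‖x m‖)) (C' * ‖x m‖) with hT
  have hTc : IsCompact T := isCompact_univ_pi fun m => isCompact_Icc
  have hmem : ∀ n, (fun m => u n (x m)) ∈ T := by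
    intro n
    rw [Set.mem_univ_pi]
    intro m
    have := abs_le.mp (hub n (x m))
    exact ⟨this.1, this.2⟩
  obtain ⟨g, -, φ, hφ, hconv⟩ := hTc.isSeqCompact hmem
  have coord : ∀ m, Tendsto (fun n => u (φ n) (x m)) atTop (𝓝 (g m)) := by
    intro m
    have := tendsto_pi_nhds.mp hconv m
    exact this
  have cauchy : ∀ y : X, CauchySeq fun n => u (φ n) y := by
    intro y
    rw [Metric.cauchySeq_iff]
    intro ε hε
    have hK : 0 < C' + 1 := by linarith
    have hr : 0 < ε / (4 * (C' + 1)) := by positivity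
    obtain ⟨m, hm⟩ := Metric.denseRange_iff.mp hx y _ hr
    have hcs := (coord m).cauchySeq
    rw [Metric.cauchySeq_iff] at hcs
    obtain ⟨Nn, hNn⟩ := hcs (ε / 2) (by linarith)
    refine ⟨Nn, fun p hp q hq => ?_⟩
    have hmid := hNn p hp q hq
    rw [Real.dist_eq] at hmid ⊢
    have hsplit : u (φ p) y - u (φ q) y =
        u (φ p) (y - x m) + (u (φ p) (x m) - u (φ q) (x m)) - u (φ q) (y - x m) := by
      simp only [map_sub]; ring
    have hb1 : |u (φ p) (y - x m)| ≤ C' * ‖y - x m‖ := hub _ _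
    have hb2 : |u (φ q) (y - x m)| ≤ C' * ‖y - x m‖ := hub _ _
    have hnm : ‖y - x m‖ < ε / (4 * (C' + 1)) := by
      rwa [← dist_eq_norm]
    have hCd : C' * ‖y - x m‖ ≤ ε / 4 := by
      have h1 : C' * ‖y - x m‖ ≤ (C' + 1) * ‖y - x m‖ :=
        mul_le_mul_of_nonneg_right (by linarith) (norm_nonneg _)
      have h2 : (C' + 1) * ‖y - x m‖ ≤ (C' + 1) * (ε / (4 * (C' + 1))) :=
        mul_le_mul_of_nonneg_left hnm.le (by linarith)
      have h3 : (C' + 1) * (ε / (4 * (C' + 1))) = ε / 4 := by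
        field_simp
      linarith
    calc |u (φ p) y - u (φ q) y|
        ≤ |u (φ p) (y - x m)| + |u (φ p) (x m) - u (φ q) (x m)| + |u (φ q) (y - x m)| := by
          rw [hsplit]
          exact (abs_sub _ _).trans (by gcongr; exact abs_add_le _ _)
      _ < ε := by linarith
  have conv : ∀ y : X, ∃ l, Tendsto (fun n => u (φ n) y) atTop (𝓝 l) := fun y =>
    cauchySeq_tendsto_of_complete (cauchy y)
  choose f hf using conv
  have hten : Tendsto (fun n y => u (φ n) y) atTop (𝓝 f) := tendsto_pi_nhds.mpr hf
  refine ⟨continuousLinearMapOfTendsto (fun n => u (φ n)) hten, φ, hφ, fun y => ?_⟩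
  exact hf y

/-- The image of the domain of `ψ` under `B` is compact. -/
lemma StandingSetup.isCompact_image_dom {X W R R₀ Ξ Ω : Type*}
    [NormedAddCommGroup X] [NormedSpace ℝ X] [SeparableSpace X] [CompleteSpace X]
    [NormedAddCommGroup W] [NormedSpace ℝ W]
    [NormedAddCommGroup R] [NormedSpace ℝ R]
    [NormedAddCommGroup R₀] [NormedSpace ℝ R₀]
    [MeasurableSpace R] [BorelSpace R] [MeasurableSpace R₀] [BorelSpace R₀]
    [MetricSpace Ξ] [MeasurableSpace Ξ] [BorelSpace Ξ]
    [MeasurableSpace Ω] (S : StandingSetup X W R R₀ Ξ Ω) :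
    IsCompact (S.B '' {u | S.ψ u ≠ ⊤}) := by
  rw [isCompact_iff_isSeqCompact]
  intro w hw
  obtain ⟨C, hC⟩ := S.ψ_dom_bdd
  choose v hv hvw using hw
  obtain ⟨u₀, φ, hφ, hws⟩ := exists_weakstar_subseq C v fun n => hC _ (hv n)
  refine ⟨S.B u₀, ⟨u₀, S.ψ_dom_closed (fun n => v (φ n)) u₀ (fun n => hv (φ n)) hws, rfl⟩,
    φ, hφ, ?_⟩
  have h := S.B_wsc (fun n => v (φ n)) u₀ hws
  have : (w ∘ φ) = fun n => S.B (v (φ n)) := by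
    funext n
    exact (hvw (φ n)).symm
  rw [this]
  exact h

end AuxLemmas

/-- Approximate feasibility of SAA solutions: if `𝒢(·,ξ)` is uniformly
`L_𝒢`-Lipschitz on the compact set `B(dom ψ)` and
`N ≥ ε⁻¹ [ln(1/δ) + ln 𝒩(ρ/(2 L_𝒢), B(dom ψ))]`, then with probability at least
`1 − δ` the feasible set of (P_SAA) is contained in
`𝒰_ε(ρ) = {u ∈ dom ψ ∣ ℙ(𝒢(Bu,ξ) ∈ K + В̄_R(0;ρ)) ≥ 1 − ε}`. -/
theorem SAA_feasible_set_approximately_feasible {X W R R₀ Ξ Ω : Type*}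
    [NormedAddCommGroup X] [NormedSpace ℝ X] [SeparableSpace X] [CompleteSpace X]
    [NormedAddCommGroup W] [NormedSpace ℝ W] [SeparableSpace W] [CompleteSpace W]
    [NormedAddCommGroup R] [NormedSpace ℝ R] [SeparableSpace R] [CompleteSpace R]
    [NormedAddCommGroup R₀] [NormedSpace ℝ R₀] [SeparableSpace R₀] [CompleteSpace R₀]
    [MeasurableSpace R] [BorelSpace R] [MeasurableSpace R₀] [BorelSpace R₀]
    [MetricSpace Ξ] [CompactSpace Ξ] [SeparableSpace Ξ]
    [MeasurableSpace Ξ] [BorelSpace Ξ] [MeasurableSpace Ω]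
    (S : StandingSetup X W R R₀ Ξ Ω) (A : Assumption3 S)
    (β : R → ℝ) (hβ_nonneg : ∀ r, 0 ≤ β r) (hβ_convex : ConvexOn ℝ Set.univ β)
    (Dβ : R → (R →L[ℝ] ℝ)) (hβ_deriv : ∀ r, HasFDerivAt β (Dβ r) r)
    (hDβ_cont : Continuous Dβ) (hβ_zero : ∀ r, β r = 0 ↔ r ∈ S.K)
    (LG : ℝ) (hLG : 0 < LG)
    (hLip : ∀ ξ : Ξ, LipschitzOnWith (Real.toNNReal LG) (fun w => S.G w ξ)
      (S.B '' {u | S.ψ u ≠ ⊤}))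
    (ε ρ δ : ℝ) (hε : 0 < ε) (hρ : 0 < ρ) (hδ₀ : 0 < δ) (hδ₁ : δ < 1)
    (N : ℕ)
    (hN : ε⁻¹ * (Real.log (1 / δ)
        + Real.log (coveringNumber (ρ / (2 * LG)) (S.B '' {u | S.ψ u ≠ ⊤}))) ≤ N) :
    ∃ A₀ : Set Ω, MeasurableSet A₀ ∧ ENNReal.ofReal (1 - δ) ≤ S.P A₀ ∧
      ∀ ω ∈ A₀, ∀ u : StrongDual ℝ X, S.ψ u ≠ ⊤ →
        (∀ i ∈ Finset.range N, S.G (S.B u) (S.samp i ω) ∈ S.K) →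
        ENNReal.ofReal (1 - ε)
          ≤ S.μ {ξ | S.G (S.B u) ξ ∈ S.K + Metric.closedBall (0 : R) ρ} := by
  classical
  haveI := S.hP
  haveI := S.hμ
  by_cases hε1 : 1 ≤ ε
  · refine ⟨Set.univ, MeasurableSet.univ, ?_, ?_⟩
    · rw [measure_univ]
      exact ENNReal.ofReal_le_one.mpr (by linarith)
    · intro ω _ u _ _
      have h0 : ENNReal.ofReal (1 - ε) = 0 := ENNReal.ofReal_eq_zero.mpr (by linarith)
      rw [h0]
      exact zero_le
  push_neg at hε1
  set A_set := S.B '' {u | S.ψ u ≠ ⊤} with hA_set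
  set ν := ρ / (2 * LG) with hν_def
  have hν : 0 < ν := div_pos hρ (by linarith)
  have hAcomp : IsCompact A_set := S.isCompact_image_dom
  have hAne : A_set.Nonempty := by
    obtain ⟨u₁, hu₁⟩ := S.ψ_proper
    exact ⟨S.B u₁, u₁, hu₁, rfl⟩
  -- a covering net of minimal cardinality
  have hset_ne : {n : ℕ | ∃ t : Finset W, t.card = n ∧
      A_set ⊆ ⋃ x ∈ t, Metric.ball x ν}.Nonempty := by
    obtain ⟨s, hsfin, hscov⟩ := (Metric.totallyBounded_iff.mp hAcomp.totallyBounded) ν hν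
    refine ⟨hsfin.toFinset.card, hsfin.toFinset, rfl, ?_⟩
    intro w hw
    obtain ⟨y, hy, hwy⟩ := Set.mem_iUnion₂.mp (hscov hw)
    exact Set.mem_iUnion₂.mpr ⟨y, hsfin.mem_toFinset.mpr hy, hwy⟩
  have hMmem : coveringNumber ν A_set ∈ {n : ℕ | ∃ t : Finset W, t.card = n ∧
      A_set ⊆ ⋃ x ∈ t, Metric.ball x ν} := Nat.sInf_mem hset_ne
  obtain ⟨t, htcard, htcov⟩ := hMmem
  set M : ℕ := coveringNumber ν A_set with hMdef
  have hM1 : 1 ≤ M := by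
    rcases hAne with ⟨w₀, hw₀⟩
    rcases Nat.eq_zero_or_pos M with h | h
    swap
    · exact h
    · exfalso
      rw [h, Finset.card_eq_zero] at htcard
      rw [htcard] at htcov
      simpa using htcov hw₀
  -- countable dense subsets of the cells
  choose c hc_sub hc_count hc_dense using
    fun j : W => exists_countable_dense_subset_set (A_set ∩ Metric.closedBall j ν)
  -- the "bad" events in the sample space Ξ
  set D : W → Set Ξ := fun j =>
    ⋂ n : ℕ, ⋃ w ∈ c j,
      {ξ | ρ - ((n : ℝ) + 1)⁻¹ < Metric.infDist (S.G w ξ) S.K} with hD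
  have hDmeas : ∀ j, MeasurableSet (D j) := by
    intro j
    refine MeasurableSet.iInter fun n => MeasurableSet.biUnion (hc_count j) fun w _ => ?_
    exact measurableSet_lt measurable_const
      ((Metric.continuous_infDist_pt S.K).measurable.comp (S.G_meas w))
  -- key property (a): u infeasible at ξ forces ξ ∈ D j
  have hkey_a : ∀ (j : W) (u : StrongDual ℝ X), S.ψ u ≠ ⊤ →
      S.B u ∈ Metric.ball j ν → ∀ ξ : Ξ,
      S.G (S.B u) ξ ∉ S.K + Metric.closedBall (0 : R) ρ → ξ ∈ D j := by
    intro j u hu hball ξ hξ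
    have hBuA : S.B u ∈ A_set := ⟨u, hu, rfl⟩
    have hBucell : S.B u ∈ A_set ∩ Metric.closedBall j ν :=
      ⟨hBuA, Metric.mem_closedBall.mpr (le_of_lt (Metric.mem_ball.mp hball))⟩
    have hinf : ρ ≤ Metric.infDist (S.G (S.B u) ξ) S.K := by
      by_contra h
      push_neg at h
      obtain ⟨k, hk, hdk⟩ := (Metric.infDist_lt_iff S.K_ne).mp h
      refine hξ (Set.mem_add.mpr ⟨k, hk, S.G (S.B u) ξ - k, ?_, by abel⟩)
      rw [Metric.mem_closedBall, dist_zero_right, ← dist_eq_norm]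
      exact le_of_lt hdk
    rw [hD]
    simp only [Set.mem_iInter, Set.mem_iUnion, Set.mem_setOf_eq, exists_prop]
    intro n
    have hcont : ContinuousWithinAt (fun w => Metric.infDist (S.G w ξ) S.K)
        A_set (S.B u) :=
      (Metric.continuous_infDist_pt S.K).continuousAt.comp_continuousWithinAt (S.G_contOn ξ _ hBuA)
    have hmemV : {w : W | ρ - ((n : ℝ) + 1)⁻¹ < Metric.infDist (S.G w ξ) S.K} ∈
        nhdsWithin (S.B u) A_set := by
      have hlt : ρ - ((n : ℝ) + 1)⁻¹ < Metric.infDist (S.G (S.B u) ξ) S.K := by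
        have hpos : (0 : ℝ) < ((n : ℝ) + 1)⁻¹ := by positivity
        linarith
      exact hcont (Ioi_mem_nhds hlt)
    obtain ⟨U, hUopen, hUmem, hUsub⟩ := mem_nhdsWithin.mp hmemV
    have hclos : S.B u ∈ closure (c j) := hc_dense j hBucell
    obtain ⟨w', hw'U, hw'c⟩ := mem_closure_iff.mp hclos U hUopen hUmem
    exact ⟨w', hw'c, hUsub ⟨hw'U, (hc_sub j hw'c).1⟩⟩
  -- key property (b): feasibility at ξ forces ξ ∉ D j
  have hkey_b : ∀ (j : W) (u : StrongDual ℝ X), S.ψ u ≠ ⊤ →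
      S.B u ∈ Metric.ball j ν → ∀ ξ : Ξ, S.G (S.B u) ξ ∈ S.K → ξ ∉ D j := by
    intro j u hu hball ξ hGK hξD
    have hBuA : S.B u ∈ A_set := ⟨u, hu, rfl⟩
    set ρu := LG * (ν + dist (S.B u) j) with hρu
    have hρu_lt : ρu < ρ := by
      have hd : dist (S.B u) j < ν := Metric.mem_ball.mp hball
      have h1 : LG * (ν + dist (S.B u) j) < LG * (2 * ν) :=
        mul_lt_mul_of_pos_left (by linarith) hLG
      have h2 : LG * (2 * ν) = ρ := by
        rw [hν_def]
        field_simp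
      linarith
    obtain ⟨n, hn⟩ := exists_nat_one_div_lt (show (0 : ℝ) < ρ - ρu by linarith)
    rw [hD] at hξD
    simp only [Set.mem_iInter, Set.mem_iUnion, Set.mem_setOf_eq, exists_prop] at hξD
    obtain ⟨w, hwc, hwlt⟩ := hξD n
    have hwcell := hc_sub j hwc
    have hle : Metric.infDist (S.G w ξ) S.K ≤ ρu := by
      calc Metric.infDist (S.G w ξ) S.K ≤ dist (S.G w ξ) (S.G (S.B u) ξ) :=
            Metric.infDist_le_dist_of_mem hGK
        _ ≤ LG * dist w (S.B u) := by
            have h := (hLip ξ).dist_le_mul w hwcell.1 (S.B u) hBuA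
            rwa [Real.coe_toNNReal _ hLG.le] at h
        _ ≤ LG * (ν + dist (S.B u) j) := by
            refine mul_le_mul_of_nonneg_left ?_ hLG.le
            calc dist w (S.B u) ≤ dist w j + dist j (S.B u) := dist_triangle _ _ _
              _ ≤ ν + dist (S.B u) j := by
                  rw [dist_comm j]
                  exact add_le_add (Metric.mem_closedBall.mp hwcell.2) le_rfl
    rw [one_div] at hn
    linarith
  -- events in Ω
  set Bset : W → Set Ω := fun j => ⋂ i ∈ Finset.range N, S.samp i ⁻¹' (D j)ᶜ with hBset
  have hBmeas : ∀ j, MeasurableSet (Bset j) := fun j =>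
    MeasurableSet.biInter (Finset.range N).countable_toSet
      fun i _ => (S.samp_meas i) (hDmeas j).compl
  set J' : Finset W := t.filter (fun j => ENNReal.ofReal ε < S.μ (D j)) with hJ'
  -- the exponential bound
  have hM0 : (0 : ℝ) < (M : ℝ) := by exact_mod_cast hM1
  have hpow : (1 - ε) ^ N ≤ δ / M := by
    have hεN : Real.log (1 / δ) + Real.log M ≤ ε * N := by
      have := (inv_mul_le_iff₀ hε).mp hN
      linarith
    have h1 : (1 - ε) ^ N ≤ Real.exp (-ε) ^ N := by
      refine pow_le_pow_left₀ (by linarith) ?_ N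
      linarith [Real.add_one_le_exp (-ε)]
    have h2 : Real.exp (-ε) ^ N = Real.exp (-(ε * N)) := by
      rw [← Real.exp_nat_mul]
      ring_nf
    have h3 : Real.exp (-(ε * N)) ≤ δ / M := by
      have hlog : -(ε * N) ≤ Real.log (δ / M) := by
        rw [Real.log_div (ne_of_gt hδ₀) (ne_of_gt hM0)]
        rw [Real.log_div one_ne_zero (ne_of_gt hδ₀), Real.log_one] at hεN
        linarith
      calc Real.exp (-(ε * N)) ≤ Real.exp (Real.log (δ / M)) := Real.exp_le_exp.mpr hlog
        _ = δ / M := Real.exp_log (div_pos hδ₀ hM0)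
    linarith [h1, h2 ▸ h3]
  -- probability bound for each bad event
  have hprod : ∀ j ∈ J', S.P (Bset j) ≤ ENNReal.ofReal ((1 - ε) ^ N) := by
    intro j hj
    have hμD : ENNReal.ofReal ε < S.μ (D j) := (Finset.mem_filter.mp hj).2
    have hcompl : S.μ (D j)ᶜ ≤ ENNReal.ofReal (1 - ε) := by
      rw [prob_compl_eq_one_sub (hDmeas j), ENNReal.ofReal_sub 1 hε.le,
        ENNReal.ofReal_one]
      exact tsub_le_tsub_left hμD.le 1
    have heq : S.P (Bset j) = ∏ i ∈ Finset.range N, S.P (S.samp i ⁻¹' (D j)ᶜ) :=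
      S.samp_indep.measure_inter_preimage_eq_mul (Finset.range N)
        (fun i _ => (hDmeas j).compl)
    rw [heq]
    calc ∏ i ∈ Finset.range N, S.P (S.samp i ⁻¹' (D j)ᶜ)
        ≤ ∏ _i ∈ Finset.range N, ENNReal.ofReal (1 - ε) := by
          refine Finset.prod_le_prod' fun i _ => ?_
          have hpre : S.P (S.samp i ⁻¹' (D j)ᶜ) = S.μ (D j)ᶜ := by
            rw [← S.samp_law i, Measure.map_apply (S.samp_meas i) (hDmeas j).compl]
          rw [hpre]
          exact hcompl
      _ = ENNReal.ofReal ((1 - ε) ^ N) := by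
          rw [Finset.prod_const, Finset.card_range, ← ENNReal.ofReal_pow (by linarith)]
  -- the union bound
  have hUmeas : MeasurableSet (⋃ j ∈ J', Bset j) :=
    J'.measurableSet_biUnion fun j _ => hBmeas j
  have hUbound : S.P (⋃ j ∈ J', Bset j) ≤ ENNReal.ofReal δ := by
    calc S.P (⋃ j ∈ J', Bset j) ≤ ∑ j ∈ J', S.P (Bset j) :=
          measure_biUnion_finset_le _ _
      _ ≤ ∑ _j ∈ J', ENNReal.ofReal ((1 - ε) ^ N) := Finset.sum_le_sum hprod
      _ = (J'.card : ℝ≥0∞) * ENNReal.ofReal ((1 - ε) ^ N) := by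
          rw [Finset.sum_const, nsmul_eq_mul]
      _ ≤ (M : ℝ≥0∞) * ENNReal.ofReal (δ / M) := by
          refine mul_le_mul' ?_ (ENNReal.ofReal_le_ofReal hpow)
          exact_mod_cast (Finset.card_filter_le t _).trans_eq htcard
      _ = ENNReal.ofReal ((M : ℝ) * (δ / M)) := by
          rw [ENNReal.ofReal_mul (le_of_lt hM0), ENNReal.ofReal_natCast]
      _ = ENNReal.ofReal δ := by
          rw [mul_div_cancel₀ _ (ne_of_gt hM0)]
  refine ⟨(⋃ j ∈ J', Bset j)ᶜ, hUmeas.compl, ?_, ?_⟩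
  · rw [prob_compl_eq_one_sub hUmeas]
    calc ENNReal.ofReal (1 - δ) = 1 - ENNReal.ofReal δ := by
          rw [ENNReal.ofReal_sub 1 hδ₀.le, ENNReal.ofReal_one]
      _ ≤ 1 - S.P (⋃ j ∈ J', Bset j) := tsub_le_tsub_left hUbound 1
  · intro ω hω u hu hfeas
    have hBuA : S.B u ∈ A_set := ⟨u, hu, rfl⟩
    obtain ⟨j, hjt, hjball⟩ := Set.mem_iUnion₂.mp (htcov hBuA)
    have hjJ' : j ∉ J' := by
      intro hjJ
      have hωB : ω ∈ Bset j := by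
        rw [hBset]
        simp only [Set.mem_iInter, Set.mem_preimage, Set.mem_compl_iff]
        intro i hi
        exact hkey_b j u hu hjball _ (hfeas i hi)
      exact hω (Set.mem_biUnion hjJ hωB)
    have hμD : S.μ (D j) ≤ ENNReal.ofReal ε := by
      by_contra h
      push_neg at h
      exact hjJ' (Finset.mem_filter.mpr ⟨hjt, h⟩)
    have hsub : (D j)ᶜ ⊆ {ξ | S.G (S.B u) ξ ∈ S.K + Metric.closedBall (0 : R) ρ} := by
      intro ξ hξ
      by_contra hmem
      exact hξ (hkey_a j u hu hjball ξ hmem)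
    calc ENNReal.ofReal (1 - ε) = 1 - ENNReal.ofReal ε := by
          rw [ENNReal.ofReal_sub 1 hε.le, ENNReal.ofReal_one]
      _ ≤ 1 - S.μ (D j) := tsub_le_tsub_left hμD 1
      _ = S.μ (D j)ᶜ := (prob_compl_eq_one_sub (hDmeas j)).symm
      _ ≤ _ := measure_mono hsub
end
end
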